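/- arXiv:2007.06318 — 7 statements merged into one kernel-verified Lean document; each statement's English description precedes it below -/
import Mathlib

section
/- Let δ, ρ ∈ (0,1) and let v ∈ 𝕊^{n−1} be such that for every λ ∈ ℝ, the number of indices i with |vᵢ − λ| ≤ ρ/√n is less than (1−δ)n (i.e., v is non almost-constant). Then there exist disjoint subsets σ₁, σ₂ ⊆ [n] with |σ₁|, |σ₂| ≥ δn/8 such that ρ/√(2n) ≤ |vᵢ − vⱼ| ≤ 6/√(δn) for all i ∈ σ₁ and j ∈ σ₂. -/
/-!
Coordinates with `|vᵢ| > 2 / √(δn)` number at most `δn / 4` (Markov's inequality for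
`∑ vᵢ² = 1`); let `T` be the others. With `k = ⌈δn / 8⌉`, let `a` be the `k`-th smallest and `b`
the `k`-th largest value of `v` on `T`. If `b - a ≤ 2ρ / √n`, the window of radius `ρ / √n`
around `(a + b) / 2` contains all but `2 (k - 1) < δn / 4` points of `T`, hence at least
`(1 - δ) n` coordinates, which `v` forbids. So the `k` points of `T` at or below `a` and the `k`
points at or above `b` are more than `2ρ / √n ≥ ρ / √(2n)` apart, while any two points of `T` are
within `4 / √(δn)`.
-/

open Finset

section OrderStatistic

variable {ι α : Type*} [LinearOrder α]

theorem exists_card_filter_lt_lt_le_card_filter_le (s : Finset ι) (f : ι → α) {k : ℕ}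
    (hk : 0 < k) (hks : k ≤ #s) :
    ∃ a, #{i ∈ s | f i < a} < k ∧ k ≤ #{i ∈ s | f i ≤ a} := by
  classical
  set A := {i ∈ s | k ≤ #{j ∈ s | f j ≤ f i}}
  have hA : A.Nonempty := by
    obtain ⟨m, hm, hmax⟩ := s.exists_max_image f (card_pos.mp (hk.trans_le hks))
    exact ⟨m, mem_filter.mpr ⟨hm, by rwa [filter_true_of_mem hmax]⟩⟩
  obtain ⟨i, hi, hmin⟩ := A.exists_min_image f hA
  refine ⟨f i, ?_, (mem_filter.mp hi).2⟩
  by_contra! hlt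
  obtain ⟨j, hj, hjmax⟩ :=
    exists_max_image {j ∈ s | f j < f i} f (card_pos.mp (hk.trans_le hlt))
  have hjA : j ∈ A := by
    refine mem_filter.mpr ⟨(mem_filter.mp hj).1, hlt.trans (card_le_card fun l hl => ?_)⟩
    exact mem_filter.mpr ⟨(mem_filter.mp hl).1, hjmax l hl⟩
  exact (hmin j hjA).not_gt (mem_filter.mp hj).2

theorem exists_card_filter_gt_lt_le_card_filter_ge (s : Finset ι) (f : ι → α) {k : ℕ}
    (hk : 0 < k) (hks : k ≤ #s) :
    ∃ b, #{i ∈ s | b < f i} < k ∧ k ≤ #{i ∈ s | b ≤ f i} := by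
  obtain ⟨b, hb⟩ := exists_card_filter_lt_lt_le_card_filter_le s (OrderDual.toDual ∘ f) hk hks
  exact ⟨OrderDual.ofDual b, hb⟩

end OrderStatistic

theorem card_sub_sum_sq_div_sq_le_card_filter_abs_le {ι : Type*} (s : Finset ι) (f : ι → ℝ)
    {c : ℝ} (hc : 0 < c) :
    (#s : ℝ) - (∑ i ∈ s, f i ^ 2) / c ^ 2 ≤ #{i ∈ s | |f i| ≤ c} := by
  have markov : (#{i ∈ s | ¬ |f i| ≤ c} : ℝ) * c ^ 2 ≤ ∑ i ∈ s, f i ^ 2 := by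
    calc (#{i ∈ s | ¬ |f i| ≤ c} : ℝ) * c ^ 2
        ≤ ∑ i ∈ s with ¬ |f i| ≤ c, f i ^ 2 := by
          rw [← nsmul_eq_mul]
          refine card_nsmul_le_sum _ _ _ fun i hi => ?_
          rw [← sq_abs (f i)]
          exact pow_le_pow_left₀ hc.le (not_le.mp (mem_filter.mp hi).2).le 2
      _ ≤ ∑ i ∈ s, f i ^ 2 :=
          sum_le_sum_of_subset_of_nonneg (filter_subset _ _) fun i _ _ => sq_nonneg _
  have hsplit : (#{i ∈ s | |f i| ≤ c} : ℝ) + #{i ∈ s | ¬ |f i| ≤ c} = #s := by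
    exact_mod_cast card_filter_add_card_filter_not (s := s) (fun i => |f i| ≤ c)
  have := (le_div_iff₀ (by positivity)).mpr markov
  linarith

theorem card_le_card_filter_lt_add_card_filter_gt_add_card_filter_abs_sub_le
    {ι : Type*} (s : Finset ι) (f : ι → ℝ) {a b r : ℝ} (h : b - a ≤ 2 * r) :
    #s ≤ #{i ∈ s | f i < a} + #{i ∈ s | b < f i} + #{i ∈ s | |f i - (a + b) / 2| ≤ r} := by
  classical
  calc #s ≤ #({i ∈ s | f i < a} ∪ {i ∈ s | b < f i} ∪ {i ∈ s | |f i - (a + b) / 2| ≤ r}) := by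
        refine card_le_card fun i hi => ?_
        simp only [mem_union, mem_filter, abs_le]
        by_cases ha : f i < a
        · exact .inl (.inl ⟨hi, ha⟩)
        by_cases hb : b < f i
        · exact .inl (.inr ⟨hi, hb⟩)
        exact .inr ⟨hi, by linarith, by linarith⟩
    _ ≤ _ := (card_union_le _ _).trans (Nat.add_le_add_right (card_union_le _ _) _)

theorem exists_separated_subsets_of_card_filter_abs_sub_le_lt {ι : Type*} (s : Finset ι)
    (f : ι → ℝ) {k : ℕ} {r : ℝ} (hk : 0 < k)
    (hspread : ∀ lam, #{i ∈ s | |f i - lam| ≤ r} + 2 * (k - 1) < #s) :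
    ∃ σ₁ ⊆ s, ∃ σ₂ ⊆ s, k ≤ #σ₁ ∧ k ≤ #σ₂ ∧ ∀ i ∈ σ₁, ∀ j ∈ σ₂, f i + 2 * r < f j := by
  have hks : k ≤ #s := by have := hspread 0; omega
  obtain ⟨a, ha_lt, ha_le⟩ := exists_card_filter_lt_lt_le_card_filter_le s f hk hks
  obtain ⟨b, hb_lt, hb_le⟩ := exists_card_filter_gt_lt_le_card_filter_ge s f hk hks
  have hgap : a + 2 * r < b := by
    by_contra! h
    have := card_le_card_filter_lt_add_card_filter_gt_add_card_filter_abs_sub_le s f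
      (a := a) (b := b) (r := r) (by linarith)
    have := hspread ((a + b) / 2)
    omega
  refine ⟨{i ∈ s | f i ≤ a}, filter_subset _ _, {i ∈ s | b ≤ f i}, filter_subset _ _, ha_le, hb_le,
    fun i hi j hj => ?_⟩
  linarith [(mem_filter.mp hi).2, (mem_filter.mp hj).2]

theorem stmt_2 (n : ℕ) (δ ρ : ℝ) (hδ : δ ∈ Set.Ioo (0:ℝ) 1) (hρ : ρ ∈ Set.Ioo (0:ℝ) 1)
    (v : Fin n → ℝ) (hv : ∑ i, (v i)^2 = 1)
    (hnc : ∀ lam : ℝ,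
      (((Finset.univ : Finset (Fin n)).filter
          (fun i => |v i - lam| ≤ ρ / Real.sqrt n)).card : ℝ) < (1 - δ) * n) :
    ∃ σ₁ σ₂ : Finset (Fin n), Disjoint σ₁ σ₂ ∧
      δ * n / 8 ≤ (σ₁.card : ℝ) ∧ δ * n / 8 ≤ (σ₂.card : ℝ) ∧
      ∀ i ∈ σ₁, ∀ j ∈ σ₂,
        ρ / Real.sqrt (2 * n) ≤ |v i - v j| ∧ |v i - v j| ≤ 6 / Real.sqrt (δ * n) := by
  have hδ0 := hδ.1
  have hρ0 := hρ.1
  have hn : (0 : ℝ) < n := Nat.cast_pos.mpr (Nat.pos_of_ne_zero (by rintro rfl; simp at hv))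
  have hδn : 0 < δ * n := by positivity
  set c := 2 / Real.sqrt (δ * n) with hc
  set T : Finset (Fin n) := {i | |v i| ≤ c}
  have hc2 : c ^ 2 = 4 / (δ * n) := by rw [hc, div_pow, Real.sq_sqrt hδn.le]; norm_num
  have hT : (n : ℝ) - δ * n / 4 ≤ #T := by
    simpa [hv, hc2] using
      card_sub_sum_sq_div_sq_le_card_filter_abs_le univ v (c := c) (by positivity)
  set k := ⌈δ * n / 8⌉₊
  have hk : 0 < k := Nat.ceil_pos.mpr (by positivity)
  have hk_lt : (k : ℝ) < δ * n / 8 + 1 := Nat.ceil_lt_add_one (by positivity)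
  have hspread : ∀ lam, #{i ∈ T | |v i - lam| ≤ ρ / Real.sqrt n} + 2 * (k - 1) < #T := by
    intro lam
    have hmono : #{i ∈ T | |v i - lam| ≤ ρ / Real.sqrt n} ≤
        #{i | |v i - lam| ≤ ρ / Real.sqrt n} :=
      card_le_card (filter_subset_filter _ (subset_univ _))
    rw [← Nat.cast_lt (α := ℝ)]
    push_cast [Nat.cast_sub hk]
    linarith [hnc lam, (Nat.cast_le (α := ℝ)).mpr hmono]
  obtain ⟨σ₁, hσ₁, σ₂, hσ₂, hk₁, hk₂, hsep⟩ :=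
    exists_separated_subsets_of_card_filter_abs_sub_le_lt T v hk hspread
  have hr : 0 ≤ ρ / Real.sqrt n := by positivity
  have hρn : ρ / Real.sqrt (2 * n) ≤ ρ / Real.sqrt n :=
    div_le_div_of_nonneg_left hρ0.le (by positivity) (Real.sqrt_le_sqrt (by linarith))
  refine ⟨σ₁, σ₂, disjoint_left.mpr fun i h₁ h₂ => ?_,
    (Nat.le_ceil _).trans (by exact_mod_cast hk₁), (Nat.le_ceil _).trans (by exact_mod_cast hk₂),
    fun i hi j hj => ⟨?_, ?_⟩⟩
  · linarith [hsep i h₁ i h₂]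
  · rw [abs_sub_comm]
    exact le_abs.mpr (.inl (by linarith [hsep i hi j hj]))
  · calc |v i - v j| ≤ c + c :=
          (abs_sub _ _).trans (add_le_add (mem_filter.mp (hσ₁ hi)).2 (mem_filter.mp (hσ₂ hj)).2)
      _ ≤ 6 / Real.sqrt (δ * n) := by rw [hc, ← add_div]; gcongr; norm_num
end

section
/- Let X be a real random variable and let ε₀ ∈ (0,1), B ≥ 1. Suppose X₁,...,X_m are independent random variables each satisfying P(|Xᵢ| ≤ ε) ≤ Bε for all ε ≥ ε₀. Then there is an absolute constant C > 0 such that for every ε ≥ ε₀, P(‖(X₁,...,X_m)‖ ≤ ε√m) ≤ (CBε)^m, where ‖·‖ is the Euclidean norm on ℝ^m. -/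
/-!
Chernoff's method with the Gaussian weight `exp (-(x / ε) ^ 2)`. On the event
`∑ Xᵢ² ≤ ε² m` the product `∏ exp (-(Xᵢ / ε) ^ 2)` is at least `e^{-m}`, so by Markov's inequality
and independence the probability is at most `e^m ∏ 𝔼 exp (-(Xᵢ / ε) ^ 2)`. Each factor is at most
`Bε / (1 - e^{-1/2})`: splitting the range of `|Xᵢ|` into the shells `|Xᵢ| ≤ ε √(k + 1)` gives
`𝔼 exp (-(Xᵢ / ε) ^ 2) ≤ ∑ₖ e^{-k} Bε √(k + 1)`, and `√(k + 1) ≤ e^{k/2}`.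
-/

open MeasureTheory ProbabilityTheory Real
open scoped ENNReal

lemma Real.sqrt_add_one_le_exp_half (x : ℝ) : √(x + 1) ≤ exp (x / 2) := by
  rw [exp_half]
  exact sqrt_le_sqrt (by linarith [add_one_le_exp x])

lemma Real.exp_neg_mul_sqrt_add_one_le (k : ℕ) : exp (-k) * √(k + 1) ≤ exp (-(1 / 2)) ^ k :=
  calc exp (-k) * √(k + 1) ≤ exp (-k) * exp (k / 2) := by
        gcongr; exact sqrt_add_one_le_exp_half _
    _ = exp (-(1 / 2)) ^ k := by rw [← exp_add, ← exp_nat_mul]; ring_nf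

lemma ENNReal.ofReal_exp_neg_sq_div_le_tsum_indicator (x : ℝ) {ε : ℝ} (hε : 0 < ε) :
    ENNReal.ofReal (exp (-(x / ε) ^ 2)) ≤
      ∑' k : ℕ, {y : ℝ | |y| ≤ ε * √(k + 1)}.indicator (fun _ ↦ ENNReal.ofReal (exp (-k))) x := by
  set k := ⌊(x / ε) ^ 2⌋₊
  have hx : |x| ≤ ε * √(k + 1) := by
    have := abs_le_sqrt (Nat.lt_floor_add_one ((x / ε) ^ 2)).le
    rwa [abs_div, abs_of_pos hε, div_le_iff₀ hε, mul_comm] at this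
  calc ENNReal.ofReal (exp (-(x / ε) ^ 2)) ≤ ENNReal.ofReal (exp (-k)) := by
        gcongr; exact Nat.floor_le (sq_nonneg _)
    _ = {y : ℝ | |y| ≤ ε * √(k + 1)}.indicator (fun _ ↦ ENNReal.ofReal (exp (-k))) x :=
        (Set.indicator_of_mem (s := {y : ℝ | |y| ≤ ε * √(k + 1)}) hx fun _ ↦ _).symm
    _ ≤ _ := ENNReal.le_tsum k

lemma lintegral_ofReal_exp_neg_sq_div_le {Ω : Type*} [MeasurableSpace Ω] {μ : Measure Ω}
    {X : Ω → ℝ} (hX : Measurable X) {B ε : ℝ} (hB : 0 ≤ B) (hε : 0 < ε)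
    (hsmall : ∀ δ ≥ ε, μ {ω | |X ω| ≤ δ} ≤ ENNReal.ofReal (B * δ)) :
    ∫⁻ ω, ENNReal.ofReal (exp (-(X ω / ε) ^ 2)) ∂μ ≤
      ENNReal.ofReal ((1 - exp (-(1 / 2)))⁻¹ * B * ε) := by
  set r := exp (-(1 / 2))
  have hr1 : r < 1 := exp_lt_one_iff.mpr (by norm_num)
  have hball : ∀ δ : ℝ, MeasurableSet {y : ℝ | |y| ≤ δ} :=
    fun δ ↦ measurableSet_le measurable_abs measurable_const
  calc ∫⁻ ω, ENNReal.ofReal (exp (-(X ω / ε) ^ 2)) ∂μ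
      ≤ ∫⁻ ω, ∑' k : ℕ, {y : ℝ | |y| ≤ ε * √(k + 1)}.indicator
          (fun _ ↦ ENNReal.ofReal (exp (-k))) (X ω) ∂μ :=
        lintegral_mono fun ω ↦ ENNReal.ofReal_exp_neg_sq_div_le_tsum_indicator (X ω) hε
    _ = ∑' k : ℕ, ENNReal.ofReal (exp (-k)) * μ {ω | |X ω| ≤ ε * √(k + 1)} := by
        refine (lintegral_tsum fun k ↦ ?_).trans
          (tsum_congr fun k ↦ lintegral_indicator_const_comp hX (hball _) _)
        exact ((measurable_const.indicator (hball _)).comp hX).aemeasurable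
    _ ≤ ∑' k : ℕ, ENNReal.ofReal (B * ε * r ^ k) := by
        refine ENNReal.tsum_le_tsum fun k ↦ ?_
        have hδ : ε ≤ ε * √(k + 1) :=
          le_mul_of_one_le_right hε.le (one_le_sqrt.mpr (by simp))
        calc ENNReal.ofReal (exp (-k)) * μ {ω | |X ω| ≤ ε * √(k + 1)}
            ≤ ENNReal.ofReal (exp (-k)) * ENNReal.ofReal (B * (ε * √(k + 1))) := by
              gcongr; exact hsmall _ hδ
          _ = ENNReal.ofReal (B * ε * (exp (-k) * √(k + 1))) := by
              rw [← ENNReal.ofReal_mul (exp_nonneg _)]; ring_nf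
          _ ≤ ENNReal.ofReal (B * ε * r ^ k) := by
              gcongr; exact exp_neg_mul_sqrt_add_one_le k
    _ = ENNReal.ofReal (∑' k : ℕ, B * ε * r ^ k) :=
        (ENNReal.ofReal_tsum_of_nonneg (fun k ↦ by positivity)
          ((summable_geometric_of_lt_one (exp_nonneg _) hr1).mul_left _)).symm
    _ = ENNReal.ofReal ((1 - r)⁻¹ * B * ε) := by
        rw [tsum_mul_left, tsum_geometric_of_lt_one (exp_nonneg _) hr1]
        congr 1; ring

lemma measure_sqrt_sum_sq_le_le_of_lintegral_exp_le {Ω ι : Type*} [MeasurableSpace Ω] [Fintype ι]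
    {μ : Measure Ω} {X : ι → Ω → ℝ} (hX : ∀ i, Measurable (X i)) (hind : iIndepFun X μ) {ε a : ℝ}
    (hε : 0 < ε) (ha : 0 ≤ a)
    (hexp : ∀ i, ∫⁻ ω, ENNReal.ofReal (exp (-(X i ω / ε) ^ 2)) ∂μ ≤ ENNReal.ofReal a) :
    μ {ω | √(∑ i, X i ω ^ 2) ≤ ε * √(Fintype.card ι)} ≤
      ENNReal.ofReal ((exp 1 * a) ^ Fintype.card ι) := by
  set n := Fintype.card ι
  set g : ℝ → ℝ≥0∞ := fun x ↦ ENNReal.ofReal (exp (-(x / ε) ^ 2))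
  have hg : Measurable g := by unfold g; fun_prop
  have hprod : ∀ ω, ∏ i, g (X i ω) = ENNReal.ofReal (exp (-∑ i, (X i ω / ε) ^ 2)) := fun ω ↦ by
    rw [← ENNReal.ofReal_prod_of_nonneg fun i _ ↦ exp_nonneg _, ← exp_sum, Finset.sum_neg_distrib]
  have hball : {ω | √(∑ i, X i ω ^ 2) ≤ ε * √n} ⊆
      {ω | 1 ≤ ENNReal.ofReal (exp n) * ∏ i, g (X i ω)} := by
    intro ω hω
    have hsum : ∑ i, X i ω ^ 2 ≤ ε ^ 2 * n := by
      rwa [← sqrt_le_sqrt_iff (by positivity), sqrt_mul (sq_nonneg _), sqrt_sq hε.le]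
    rw [Set.mem_ofPred_eq, hprod, ← ENNReal.ofReal_mul (exp_nonneg _), ← exp_add,
      ENNReal.one_le_ofReal, one_le_exp_iff, ← sub_eq_add_neg, sub_nonneg]
    simp_rw [div_pow, ← Finset.sum_div]
    rwa [div_le_iff₀ (by positivity), mul_comm]
  calc μ {ω | √(∑ i, X i ω ^ 2) ≤ ε * √n}
      ≤ μ {ω | 1 ≤ ENNReal.ofReal (exp n) * ∏ i, g (X i ω)} := measure_mono hball
    _ ≤ ∫⁻ ω, ENNReal.ofReal (exp n) * ∏ i, g (X i ω) ∂μ := by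
        simpa using mul_meas_ge_le_lintegral₀ (by fun_prop) 1
    _ = ENNReal.ofReal (exp n) * ∏ i, ∫⁻ ω, g (X i ω) ∂μ := by
        rw [lintegral_const_mul _ (by fun_prop)]
        congr 1
        exact lintegral_prod_eq_prod_lintegral_of_indepFun _ (fun i ↦ g ∘ X i)
          (hind.comp _ fun _ ↦ hg) fun i ↦ hg.comp (hX i)
    _ ≤ ENNReal.ofReal (exp n) * ENNReal.ofReal a ^ n := by
        gcongr
        exact Finset.prod_le_pow_card _ _ _ fun i _ ↦ hexp i
    _ = ENNReal.ofReal ((exp 1 * a) ^ n) := by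
        rw [← ENNReal.ofReal_pow ha, ← ENNReal.ofReal_mul (exp_nonneg _), mul_pow, ← exp_nat_mul,
          mul_one]

/-- Tensorization lemma (Rudelson–Vershynin): if each `Xᵢ` satisfies the small-ball
bound `P(|Xᵢ| ≤ ε) ≤ Bε` for `ε ≥ ε₀`, and the `Xᵢ` are independent, then
`P(‖(X₁,…,X_m)‖ ≤ ε√m) ≤ (CBε)^m` for `ε ≥ ε₀`, with an absolute constant `C`. -/
theorem stmt_3 :
    ∃ C : ℝ, 0 < C ∧
      ∀ {Ω : Type} [MeasurableSpace Ω] (μ : Measure Ω), IsProbabilityMeasure μ →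
      ∀ (m : ℕ) (X : Fin m → Ω → ℝ) (ε₀ B : ℝ),
        ε₀ ∈ Set.Ioo (0:ℝ) 1 → 1 ≤ B →
        (∀ i, Measurable (X i)) →
        iIndepFun X μ →
        (∀ i, ∀ ε ≥ ε₀, μ {ω | |X i ω| ≤ ε} ≤ ENNReal.ofReal (B * ε)) →
        ∀ ε ≥ ε₀,
          μ {ω | Real.sqrt (∑ i, (X i ω)^2) ≤ ε * Real.sqrt m}
            ≤ ENNReal.ofReal ((C * B * ε)^m) := by
  have hK : 0 < (1 - exp (-(1 / 2)))⁻¹ :=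
    inv_pos.mpr (sub_pos.mpr (exp_lt_one_iff.mpr (by norm_num)))
  refine ⟨exp 1 * (1 - exp (-(1 / 2)))⁻¹, mul_pos (exp_pos 1) hK, ?_⟩
  intro Ω _ μ _ m X ε₀ B hε₀ hB hX hind hsmall ε hε
  have hεpos : 0 < ε := hε₀.1.trans_le hε
  have hBpos : 0 ≤ B := zero_le_one.trans hB
  have h := measure_sqrt_sum_sq_le_le_of_lintegral_exp_le hX hind hεpos (by positivity) fun i ↦
    lintegral_ofReal_exp_neg_sq_div_le (hX i) hBpos hεpos fun δ hδ ↦ hsmall i δ (hε.trans hδ)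
  rw [Fintype.card_fin] at h
  convert h using 3
  ring
end

section
/- Let α > 0 and γ ∈ (0,1). Define CLCD_{α,γ}(v) := inf{θ > 0 : dist(θ·D(v), ℤ^{C(n,2)}) < min(γ‖θ·D(v)‖, α)}. Let v, w ∈ ℝⁿ with ‖v − w‖ < γ‖D(v)‖/(5√n). Then CLCD_{α/2, γ/2}(w) ≥ min{CLCD_{α,γ}(v), α/(4√n·‖v − w‖)}. -/
/-!
`D` is linear and `‖D x‖ ≤ √n ‖x‖`, because `∑_{i<j} (xᵢ - xⱼ)² = n ‖x‖² - (∑ xᵢ)²`.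
Hence, with `ε = ‖v - w‖`, both `‖D w‖ ≤ ‖D v‖ + √n ε` and
`dist(θ D v, ℤ^N) ≤ dist(θ D w, ℤ^N) + θ √n ε`. If `θ < α / (4 √n ε)` witnesses
`CLCD_{α/2,γ/2}(w)`, the extra error `θ √n ε` is below `α / 4` and, since
`√n ε < γ ‖D v‖ / 5`, below `γ θ ‖D v‖ / 5`; so `θ` also witnesses `CLCD_{α,γ}(v)`.
-/

open scoped ENNReal

/-- Euclidean norm of `D(x)`, the vector of pairwise differences `xᵢ - xⱼ`, `i < j`. -/
noncomputable def Dnorm (n : ℕ) (x : Fin n → ℝ) : ℝ :=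
  Real.sqrt (∑ i : Fin n, ∑ j : Fin n, if i < j then (x i - x j)^2 else 0)

/-- Euclidean distance from `θ · D(x)` to the integer lattice `ℤ^{C(n,2)}`. -/
noncomputable def DlatticeDist (n : ℕ) (θ : ℝ) (x : Fin n → ℝ) : ℝ :=
  sInf {d : ℝ | ∃ p : Fin n → Fin n → ℤ,
    d = Real.sqrt (∑ i : Fin n, ∑ j : Fin n,
        if i < j then (θ * (x i - x j) - (p i j : ℝ))^2 else 0)}

/-- The Combinatorial Least Common Denominator
`CLCD_{α,γ}(v) = inf{θ > 0 : dist(θ·D(v), ℤ^{C(n,2)}) < min(γ‖θ·D(v)‖, α)}`,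
valued in `ℝ≥0∞` (the infimum of the empty set being `∞`). -/
noncomputable def CLCD (n : ℕ) (α γ : ℝ) (v : Fin n → ℝ) : ℝ≥0∞ :=
  ⨅ θ ∈ {θ : ℝ | 0 < θ ∧
      DlatticeDist n θ v < min (γ * (θ * Dnorm n v)) α}, ENNReal.ofReal θ

/-- Euclidean norm on `ℝⁿ`. -/
noncomputable def enorm' {n : ℕ} (x : Fin n → ℝ) : ℝ := Real.sqrt (∑ i, (x i)^2)

open Finset

-- `ℝ^{C(n,2)}` sits in `EuclideanSpace ℝ (Fin n × Fin n)` as the vectors vanishing off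
-- the pairs `i < j`.
noncomputable def pairVec (n : ℕ) :
    (Fin n → Fin n → ℝ) →ₗ[ℝ] EuclideanSpace ℝ (Fin n × Fin n) where
  toFun f := WithLp.toLp 2 fun p => if p.1 < p.2 then f p.1 p.2 else 0
  map_add' f g := by ext p; by_cases h : p.1 < p.2 <;> simp [h]
  map_smul' c f := by ext p; by_cases h : p.1 < p.2 <;> simp [h]

lemma norm_pairVec (n : ℕ) (f : Fin n → Fin n → ℝ) :
    ‖pairVec n f‖ = √(∑ i, ∑ j, if i < j then f i j ^ 2 else 0) := by
  rw [EuclideanSpace.norm_eq, Fintype.sum_prod_type]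
  congr 1
  refine sum_congr rfl fun i _ => sum_congr rfl fun j _ => ?_
  by_cases h : i < j <;> simp [pairVec, h]

noncomputable def pairDiff (n : ℕ) : (Fin n → ℝ) →ₗ[ℝ] EuclideanSpace ℝ (Fin n × Fin n) where
  toFun x := pairVec n fun i j => x i - x j
  map_add' x y := by
    rw [← map_add]; congr 1; funext i j; simp only [Pi.add_apply]; ring
  map_smul' c x := by
    rw [RingHom.id_apply, ← map_smul]; congr 1; funext i j
    simp only [Pi.smul_apply, smul_eq_mul]; ring

lemma Dnorm_eq_norm_pairDiff (n : ℕ) (x : Fin n → ℝ) : Dnorm n x = ‖pairDiff n x‖ := by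
  simp [Dnorm, pairDiff, norm_pairVec]

lemma sum_pairs_sub_sq_le (n : ℕ) (x : Fin n → ℝ) :
    (∑ i, ∑ j, if i < j then (x i - x j) ^ 2 else 0) ≤ n * ∑ i, x i ^ 2 := by
  have hswap : (∑ i, ∑ j, if i < j then (x i - x j) ^ 2 else 0)
      = ∑ i, ∑ j, if j < i then (x i - x j) ^ 2 else 0 := by
    rw [sum_comm]
    refine sum_congr rfl fun i _ => sum_congr rfl fun j _ => ?_
    rw [← neg_sub, neg_sq]
  have htwice : 2 * (∑ i, ∑ j, if i < j then (x i - x j) ^ 2 else 0)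
      ≤ ∑ i : Fin n, ∑ j : Fin n, (x i - x j) ^ 2 := by
    rw [two_mul]
    nth_rw 2 [hswap]
    rw [← sum_add_distrib]
    refine sum_le_sum fun i _ => ?_
    rw [← sum_add_distrib]
    refine sum_le_sum fun j _ => ?_
    rcases lt_trichotomy i j with h | rfl | h
    · simp [h, h.not_gt]
    · simp
    · simp [h, h.not_gt]
  have hexpand : ∑ i : Fin n, ∑ j : Fin n, (x i - x j) ^ 2
      = 2 * (n * ∑ i, x i ^ 2) - 2 * (∑ i, x i) ^ 2 := by
    simp only [sub_sq, sum_add_distrib, sum_sub_distrib, sum_const, card_univ, Fintype.card_fin,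
      nsmul_eq_mul, ← mul_sum, ← sum_mul]
    ring
  nlinarith [sq_nonneg (∑ i, x i)]

lemma Dnorm_le_sqrt_mul_enorm' (n : ℕ) (x : Fin n → ℝ) : Dnorm n x ≤ √n * enorm' x := by
  rw [Dnorm, enorm', ← Real.sqrt_mul n.cast_nonneg]
  exact Real.sqrt_le_sqrt (sum_pairs_sub_sq_le n x)

lemma Dnorm_le_add (n : ℕ) (v w : Fin n → ℝ) : Dnorm n w ≤ Dnorm n v + Dnorm n (v - w) := by
  simp only [Dnorm_eq_norm_pairDiff, map_sub]
  simpa using norm_sub_le (pairDiff n v) (pairDiff n v - pairDiff n w)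

lemma smul_pairDiff_sub_pairVec (n : ℕ) (θ : ℝ) (x : Fin n → ℝ)
    (f : Fin n → Fin n → ℝ) :
    θ • pairDiff n x - pairVec n f = pairVec n fun i j => θ * (x i - x j) - f i j := by
  show θ • pairVec n (fun i j => x i - x j) - pairVec n f = _
  rw [← map_smul, ← map_sub]
  rfl

lemma DlatticeDist_eq_iInf (n : ℕ) (θ : ℝ) (x : Fin n → ℝ) :
    DlatticeDist n θ x = ⨅ p : Fin n → Fin n → ℤ,
      ‖θ • pairDiff n x - pairVec n (fun i j => (p i j : ℝ))‖ := by
  simp only [DlatticeDist, iInf, smul_pairDiff_sub_pairVec, norm_pairVec]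
  congr 1
  ext d
  simp [eq_comm]

lemma DlatticeDist_le_add (n : ℕ) (θ : ℝ) (v w : Fin n → ℝ) :
    DlatticeDist n θ v ≤ DlatticeDist n θ w + |θ| * Dnorm n (v - w) := by
  have hbdd : BddBelow (Set.range fun p : Fin n → Fin n → ℤ =>
      ‖θ • pairDiff n v - pairVec n (fun i j => (p i j : ℝ))‖) :=
    ⟨0, by rintro _ ⟨p, rfl⟩; exact norm_nonneg _⟩
  rw [DlatticeDist_eq_iInf, DlatticeDist_eq_iInf, ← sub_le_iff_le_add]
  refine le_ciInf fun p => sub_le_iff_le_add.mpr ?_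
  set P := pairVec n fun i j => (p i j : ℝ)
  calc (⨅ q : Fin n → Fin n → ℤ, ‖θ • pairDiff n v - pairVec n (fun i j => (q i j : ℝ))‖)
      ≤ ‖θ • pairDiff n v - P‖ := ciInf_le hbdd p
    _ = ‖(θ • pairDiff n w - P) + θ • pairDiff n (v - w)‖ := by
      rw [map_sub, smul_sub]; abel_nf
    _ ≤ ‖θ • pairDiff n w - P‖ + |θ| * Dnorm n (v - w) := by
      rw [Dnorm_eq_norm_pairDiff, ← Real.norm_eq_abs, ← norm_smul]; exact norm_add_le _ _

lemma min_CLCD_le_CLCD {n : ℕ} {α γ α' γ' M : ℝ} {v w : Fin n → ℝ}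
    (h : ∀ θ, 0 < θ → θ < M → DlatticeDist n θ w < min (γ' * (θ * Dnorm n w)) α' →
      DlatticeDist n θ v < min (γ * (θ * Dnorm n v)) α) :
    min (CLCD n α γ v) (ENNReal.ofReal M) ≤ CLCD n α' γ' w := by
  refine le_iInf₂ fun θ ⟨hθ, hw⟩ => ?_
  rcases lt_or_ge θ M with hθM | hMθ
  · exact (min_le_left _ _).trans (iInf₂_le θ ⟨hθ, h θ hθ hθM hw⟩)
  · exact (min_le_right _ _).trans (ENNReal.ofReal_le_ofReal hMθ)

theorem stmt_6 (n : ℕ) (α γ : ℝ) (hα : 0 < α) (hγ : γ ∈ Set.Ioo (0:ℝ) 1)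
    (v w : Fin n → ℝ)
    (hvw : enorm' (v - w) < γ * Dnorm n v / (5 * Real.sqrt n)) :
    min (CLCD n α γ v) (ENNReal.ofReal (α / (4 * Real.sqrt n * enorm' (v - w))))
      ≤ CLCD n (α/2) (γ/2) w := by
  have hδ := Dnorm_le_sqrt_mul_enorm' n (v - w)
  have hε : 0 ≤ enorm' (v - w) := Real.sqrt_nonneg _
  have hn : 0 < √n := by
    by_contra! h
    rw [le_antisymm h (Real.sqrt_nonneg _), mul_zero, div_zero] at hvw
    linarith
  have hγD : 5 * (√n * enorm' (v - w)) < γ * Dnorm n v := by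
    have := (lt_div_iff₀ (by positivity)).mp hvw
    linarith
  refine min_CLCD_le_CLCD fun θ hθ hθM hw => ?_
  have hθα : θ * (4 * √n * enorm' (v - w)) < α := by
    rcases (mul_nonneg (mul_nonneg zero_le_four hn.le) hε).eq_or_lt with h | h
    · rwa [← h, mul_zero]
    · exact (lt_div_iff₀ h).mp hθM
  have hv := DlatticeDist_le_add n θ v w
  have hE := mul_le_mul_of_nonneg_left (Dnorm_le_add n v w) hθ.le
  rw [abs_of_pos hθ] at hv
  rw [lt_min_iff] at hw ⊢
  have hθδ := mul_le_mul_of_nonneg_left hδ hθ.le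
  have hδ0 : 0 ≤ θ * Dnorm n (v - w) := mul_nonneg hθ.le (Real.sqrt_nonneg _)
  constructor
  · linarith [mul_le_mul_of_nonneg_left hE (half_pos hγ.1).le, mul_lt_mul_of_pos_left hγD hθ,
      mul_nonneg (sub_nonneg.mpr hγ.2.le) hδ0]
  · linarith
end

section
/- Let δ, ρ ∈ (0,1), and let v ∈ 𝕊^{n−1} be non almost-constant with parameters (δ, ρ). Then for every α > 0 and every γ with 0 < γ < δρ/12, one has CLCD_{α,γ}(v) ≥ √(δn)/7. -/
open Finset
open scoped ENNReal

/-! Suppose `θ < √(δn)/7`. By Chebyshev, all but at most `16θ² < 16δn/49` coordinates satisfy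
`|vᵢ| < 1/(4θ)`; for two such coordinates `|θ(vᵢ - vⱼ)| < 1/2`, so `0` is a nearest integer to
`θ(vᵢ - vⱼ)` and these pairs contribute fully to the distance from `θ D(v)` to the lattice.
Non-almost-constancy at `λ = vᵢ` makes each small coordinate differ by more than `ρ/√n` from at
least `δn/2` other small ones, so that distance is at least `δρθ√n / (2√2)`. On the other hand
`‖D(v)‖ ≤ √(2n)`, so the distance is below `√2 γθ√n < √2 δρθ√n / 12`: a contradiction. -/

lemma sq_le_sq_sub_intCast {y : ℝ} (hy : |y| ≤ 1 / 2) (m : ℤ) : y ^ 2 ≤ (y - m) ^ 2 := by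
  refine sq_le_sq.2 ?_
  rcases eq_or_ne m 0 with rfl | hm
  · simp
  · have h1 : (1 : ℝ) ≤ |(m : ℝ)| := by exact_mod_cast Int.one_le_abs hm
    have h2 := abs_sub_abs_le_abs_sub (m : ℝ) y
    rw [abs_sub_comm] at h2
    linarith

lemma abs_mul_sub_le_half_of_abs_lt {θ x y : ℝ} (hθ : 0 < θ) (hx : |x| < 1 / (4 * θ))
    (hy : |y| < 1 / (4 * θ)) : |θ * (x - y)| ≤ 1 / 2 := by
  rw [lt_div_iff₀ (by positivity)] at hx hy
  rw [abs_mul, abs_of_pos hθ]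
  nlinarith [abs_sub x y]

lemma sum_sum_le_two_mul_sum_sum_of_le_add_swap {ι : Type*} [Fintype ι] (T : Finset ι)
    {f g : ι → ι → ℝ} (hg : ∀ i j, 0 ≤ g i j) (h : ∀ i ∈ T, ∀ j ∈ T, f i j ≤ g i j + g j i) :
    ∑ i ∈ T, ∑ j ∈ T, f i j ≤ 2 * ∑ i, ∑ j, g i j := by
  have hg' : ∀ i j, 0 ≤ g i j + g j i := fun i j => add_nonneg (hg i j) (hg j i)
  calc ∑ i ∈ T, ∑ j ∈ T, f i j ≤ ∑ i ∈ T, ∑ j ∈ T, (g i j + g j i) :=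
        sum_le_sum fun i hi => sum_le_sum fun j hj => h i hi j hj
    _ ≤ ∑ i ∈ T, ∑ j, (g i j + g j i) :=
        sum_le_sum fun i _ => sum_le_sum_of_subset_of_nonneg (subset_univ T) fun j _ _ => hg' i j
    _ ≤ ∑ i, ∑ j, (g i j + g j i) :=
        sum_le_sum_of_subset_of_nonneg (subset_univ T) fun i _ _ => sum_nonneg fun j _ => hg' i j
    _ = 2 * ∑ i, ∑ j, g i j := by
        simp only [sum_add_distrib]
        rw [sum_comm (f := fun i j => g j i)]
        ring

lemma DlatticeDist_nonneg (n : ℕ) (θ : ℝ) (x : Fin n → ℝ) : 0 ≤ DlatticeDist n θ x :=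
  Real.sInf_nonneg fun _ ⟨_, hp⟩ => hp ▸ Real.sqrt_nonneg _

lemma sqrt_le_DlatticeDist {n : ℕ} {θ c : ℝ} {x : Fin n → ℝ}
    (h : ∀ p : Fin n → Fin n → ℤ,
      c ≤ ∑ i, ∑ j, if i < j then (θ * (x i - x j) - (p i j : ℝ)) ^ 2 else 0) :
    √c ≤ DlatticeDist n θ x :=
  le_csInf ⟨_, 0, rfl⟩ fun _ ⟨p, hp⟩ => hp ▸ Real.sqrt_le_sqrt (h p)

lemma sum_sum_sq_le_two_mul_DlatticeDist_sq {n : ℕ} {θ : ℝ} {x : Fin n → ℝ}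
    {T : Finset (Fin n)} (hT : ∀ i ∈ T, ∀ j ∈ T, |θ * (x i - x j)| ≤ 1 / 2) :
    ∑ i ∈ T, ∑ j ∈ T, (θ * (x i - x j)) ^ 2 ≤ 2 * DlatticeDist n θ x ^ 2 := by
  suffices h : ∀ p : Fin n → Fin n → ℤ, (∑ i ∈ T, ∑ j ∈ T, (θ * (x i - x j)) ^ 2) / 2 ≤
      ∑ i, ∑ j, if i < j then (θ * (x i - x j) - (p i j : ℝ)) ^ 2 else 0 by
    have := (Real.sqrt_le_left (DlatticeDist_nonneg n θ x)).1 (sqrt_le_DlatticeDist h)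
    linarith
  intro p
  rw [div_le_iff₀ two_pos, mul_comm]
  refine sum_sum_le_two_mul_sum_sum_of_le_add_swap T
    (fun i j => ite_nonneg (sq_nonneg _) le_rfl) fun i hi j hj => ?_
  rcases lt_trichotomy i j with hij | rfl | hij
  · simpa [hij, hij.not_gt] using sq_le_sq_sub_intCast (hT i hi j hj) (p i j)
  · simp
  · have h := sq_le_sq_sub_intCast (hT j hj i hi) (p j i)
    rw [show (θ * (x j - x i)) ^ 2 = (θ * (x i - x j)) ^ 2 by ring] at h
    simpa [hij, hij.not_gt] using h

lemma Dnorm_sq_le (n : ℕ) (x : Fin n → ℝ) : Dnorm n x ^ 2 ≤ 2 * n * ∑ i, x i ^ 2 := by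
  have hsq : ∑ i, ∑ j, (x i - x j) ^ 2 = 2 * n * ∑ i, x i ^ 2 - 2 * (∑ i, x i) ^ 2 := by
    simp only [sub_sq, sum_add_distrib, sum_sub_distrib, sum_const, card_univ, Fintype.card_fin,
      nsmul_eq_mul, ← mul_sum, ← sum_mul]
    ring
  rw [Dnorm, Real.sq_sqrt (sum_nonneg fun i _ => sum_nonneg fun j _ =>
    ite_nonneg (sq_nonneg _) le_rfl)]
  calc _ ≤ ∑ i, ∑ j, (x i - x j) ^ 2 :=
        sum_le_sum fun i _ => sum_le_sum fun j _ => by split_ifs; exacts [le_rfl, sq_nonneg _]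
    _ ≤ _ := by rw [hsq]; nlinarith [sq_nonneg (∑ i, x i)]

lemma card_mul_mul_sq_le_sum_sum_sub_sq {ι : Type*} (v : ι → ℝ) (T : Finset ι) {m r : ℝ}
    (hr : 0 ≤ r) (hm : ∀ i ∈ T, m ≤ #(T.filter fun j => r < |v j - v i|)) :
    #T * m * r ^ 2 ≤ ∑ i ∈ T, ∑ j ∈ T, (v j - v i) ^ 2 := by
  rw [mul_assoc, ← nsmul_eq_mul]
  refine card_nsmul_le_sum _ _ _ fun i hi => ?_
  calc m * r ^ 2 ≤ #(T.filter fun j => r < |v j - v i|) • r ^ 2 := by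
        rw [nsmul_eq_mul]; exact mul_le_mul_of_nonneg_right (hm i hi) (sq_nonneg r)
    _ ≤ ∑ j ∈ T.filter fun j => r < |v j - v i|, (v j - v i) ^ 2 :=
        card_nsmul_le_sum _ _ _ fun j hj =>
          sq_abs (v j - v i) ▸ pow_le_pow_left₀ hr (mem_filter.1 hj).2.le 2
    _ ≤ ∑ j ∈ T, (v j - v i) ^ 2 :=
        sum_le_sum_of_subset_of_nonneg (filter_subset _ _) fun _ _ _ => sq_nonneg _

lemma card_filter_le_abs_mul_sq_le_sum_sq {ι : Type*} [Fintype ι] (v : ι → ℝ) {t : ℝ}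
    (ht : 0 ≤ t) : #(univ.filter fun i => t ≤ |v i|) * t ^ 2 ≤ ∑ i, v i ^ 2 := by
  rw [← nsmul_eq_mul]
  calc _ ≤ ∑ i ∈ univ.filter fun i => t ≤ |v i|, v i ^ 2 :=
        card_nsmul_le_sum _ _ _ fun i hi => sq_abs (v i) ▸ pow_le_pow_left₀ ht (mem_filter.1 hi).2 2
    _ ≤ ∑ i, v i ^ 2 := sum_le_sum_of_subset_of_nonneg (subset_univ _) fun i _ _ => sq_nonneg _

lemma card_filter_le_card_filter_compl_add_card {ι : Type*} [Fintype ι] [DecidableEq ι]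
    (p : ι → Prop) [DecidablePred p] (B : Finset ι) :
    #(univ.filter p) ≤ #(Bᶜ.filter p) + #B := by
  refine (card_le_card fun j hj => ?_).trans (card_union_le _ _)
  by_cases hjB : j ∈ B <;> simp_all

lemma mul_lt_card_filter_lt_abs_sub {n : ℕ} {v : Fin n → ℝ} {δ r : ℝ}
    (hnc : ∀ lam : ℝ, (#(univ.filter fun i => |v i - lam| ≤ r) : ℝ) < (1 - δ) * n) (c : ℝ) :
    δ * n < #(univ.filter fun i => r < |v i - c|) := by
  have h := card_filter_add_card_filter_not (s := univ) fun i => |v i - c| ≤ r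
  simp only [not_le, card_univ, Fintype.card_fin] at h
  have hR : (#(univ.filter fun i => |v i - c| ≤ r) : ℝ) + #(univ.filter fun i => r < |v i - c|)
      = n := by exact_mod_cast h
  linarith [hnc c]

lemma mul_sq_le_two_mul_DlatticeDist_sq {n : ℕ} {δ ρ θ : ℝ} {v : Fin n → ℝ}
    (hδ0 : 0 < δ) (hδ1 : δ ≤ 1) (hρ : 0 ≤ ρ) (hv : ∑ i, v i ^ 2 ≤ 1)
    (hnc : ∀ lam : ℝ, (#(univ.filter fun i => |v i - lam| ≤ ρ / √n) : ℝ) < (1 - δ) * n)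
    (hθ : 0 < θ) (hθ_small : θ < √(δ * n) / 7) :
    (δ * ρ / 2) ^ 2 * n * θ ^ 2 ≤ 2 * DlatticeDist n θ v ^ 2 := by
  have hθ2 : θ ^ 2 < δ * n / 49 := by
    have := pow_lt_pow_left₀ hθ_small hθ.le two_ne_zero
    rw [div_pow, Real.sq_sqrt (by positivity)] at this
    linarith
  have hn : 0 < (n : ℝ) := pos_of_mul_pos_right (by nlinarith [pow_pos hθ 2]) hδ0.le
  set B := univ.filter fun i => 1 / (4 * θ) ≤ |v i|
  have hB : (#B : ℝ) ≤ 16 * θ ^ 2 :=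
    calc (#B : ℝ) = #B * (1 / (4 * θ)) ^ 2 * (4 * θ) ^ 2 := by field_simp
      _ ≤ 1 * (4 * θ) ^ 2 := by
        gcongr; exact (card_filter_le_abs_mul_sq_le_sum_sq v (by positivity)).trans hv
      _ = 16 * θ ^ 2 := by ring
  have hsmall : ∀ i ∈ Bᶜ, ∀ j ∈ Bᶜ, |θ * (v i - v j)| ≤ 1 / 2 := fun i hi j hj =>
    abs_mul_sub_le_half_of_abs_lt hθ (by simpa [B] using hi) (by simpa [B] using hj)
  have hrows : ∀ i ∈ Bᶜ, δ * n - #B ≤ #(Bᶜ.filter fun j => ρ / √n < |v j - v i|) := by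
    intro i _
    have hcover : (#(univ.filter fun j => ρ / √n < |v j - v i|) : ℝ) ≤
        #(Bᶜ.filter fun j => ρ / √n < |v j - v i|) + #B := by
      exact_mod_cast card_filter_le_card_filter_compl_add_card _ B
    linarith [mul_lt_card_filter_lt_abs_sub hnc (v i)]
  have hBc_card : (#Bᶜ : ℝ) = n - #B := by
    rw [card_compl, Fintype.card_fin, Nat.cast_sub (by simpa using card_le_univ B)]
  have hscale : ∑ i ∈ Bᶜ, ∑ j ∈ Bᶜ, (θ * (v i - v j)) ^ 2 =
      θ ^ 2 * ∑ i ∈ Bᶜ, ∑ j ∈ Bᶜ, (v j - v i) ^ 2 := by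
    simp only [mul_sum]
    exact sum_congr rfl fun i _ => sum_congr rfl fun j _ => by ring
  calc (δ * ρ / 2) ^ 2 * n * θ ^ 2 = θ ^ 2 * ((δ * n / 2) * (δ * n / 2) * (ρ / √n) ^ 2) := by
        rw [div_pow ρ, Real.sq_sqrt hn.le]; field_simp
    _ ≤ θ ^ 2 * (#Bᶜ * (δ * n - #B) * (ρ / √n) ^ 2) := by
        gcongr
        · rw [hBc_card]; nlinarith
        · linarith
    _ ≤ θ ^ 2 * ∑ i ∈ Bᶜ, ∑ j ∈ Bᶜ, (v j - v i) ^ 2 := by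
        gcongr; exact card_mul_mul_sq_le_sum_sum_sub_sq v Bᶜ (by positivity) hrows
    _ ≤ 2 * DlatticeDist n θ v ^ 2 := hscale ▸ sum_sum_sq_le_two_mul_DlatticeDist_sq hsmall

lemma DlatticeDist_sq_lt_of_lt_mul_Dnorm {n : ℕ} {γ θ : ℝ} {v : Fin n → ℝ}
    (hv : ∑ i, v i ^ 2 ≤ 1) (h : DlatticeDist n θ v < γ * (θ * Dnorm n v)) :
    DlatticeDist n θ v ^ 2 < 2 * γ ^ 2 * θ ^ 2 * n := by
  calc DlatticeDist n θ v ^ 2 < (γ * (θ * Dnorm n v)) ^ 2 :=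
        pow_lt_pow_left₀ h (DlatticeDist_nonneg n θ v) two_ne_zero
    _ = γ ^ 2 * θ ^ 2 * Dnorm n v ^ 2 := by ring
    _ ≤ γ ^ 2 * θ ^ 2 * (2 * n * 1) := by
        gcongr; exact (Dnorm_sq_le n v).trans (by gcongr)
    _ = 2 * γ ^ 2 * θ ^ 2 * n := by ring

theorem stmt_7_general (n : ℕ) (δ ρ : ℝ) (hδ : δ ∈ Set.Ioo (0:ℝ) 1) (hρ : ρ ∈ Set.Ioo (0:ℝ) 1)
    (v : Fin n → ℝ) (hv : ∑ i, (v i)^2 = 1)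
    (hnc : ∀ lam : ℝ,
      (((Finset.univ : Finset (Fin n)).filter
          (fun i => |v i - lam| ≤ ρ / Real.sqrt n)).card : ℝ) < (1 - δ) * n)
    (α γ : ℝ) (hγ0 : 0 < γ) (hγ : γ < δ * ρ / 12) :
    ENNReal.ofReal (Real.sqrt (δ * n) / 7) ≤ CLCD n α γ v := by
  refine le_iInf₂ fun θ ⟨hθ, hdist⟩ => ENNReal.ofReal_le_ofReal (not_lt.1 fun hθ_small => ?_)
  have hlower := mul_sq_le_two_mul_DlatticeDist_sq hδ.1 hδ.2.le hρ.1.le hv.le hnc hθ hθ_small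
  have hupper := DlatticeDist_sq_lt_of_lt_mul_Dnorm hv.le (lt_min_iff.1 hdist).1
  have hγ2 : γ ^ 2 < (δ * ρ / 12) ^ 2 := pow_lt_pow_left₀ hγ hγ0.le two_ne_zero
  have hnθ : 0 ≤ (n : ℝ) * θ ^ 2 := by positivity
  nlinarith [mul_le_mul_of_nonneg_right hγ2.le hnθ, mul_nonneg (sq_nonneg (δ * ρ)) hnθ]

theorem stmt_7 (n : ℕ) (δ ρ : ℝ) (hδ : δ ∈ Set.Ioo (0:ℝ) 1) (hρ : ρ ∈ Set.Ioo (0:ℝ) 1)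
    (v : Fin n → ℝ) (hv : ∑ i, (v i)^2 = 1)
    (hnc : ∀ lam : ℝ,
      (((Finset.univ : Finset (Fin n)).filter
          (fun i => |v i - lam| ≤ ρ / Real.sqrt n)).card : ℝ) < (1 - δ) * n)
    (α γ : ℝ) (hα : 0 < α) (hγ0 : 0 < γ) (hγ : γ < δ * ρ / 12) :
    ENNReal.ofReal (Real.sqrt (δ * n) / 7) ≤ CLCD n α γ v :=
  stmt_7_general n δ ρ hδ hρ v hv hnc α γ hγ0 hγ
end

section
/- Let ξ be a real random variable with characteristic function φ(t) = E[exp(2πi ξ t)]. Then there is an absolute constant C such that for every ε > 0, sup_x P(|ξ − x| < ε) ≤ C ∫_{−1}^{1} |φ(θ/ε)| dθ. -/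
/-! Esseen's argument. The kernel `K(u) = ∫_{-T}^{T} e^{itu} dt = 2T sinc(Tu)` is at least `4T/π`
on `|u| ≤ π/(2T)` by Jordan's inequality, so Markov's inequality bounds the mass of that ball
by `(π/(4T))² ∫ K² dν`. Expanding `K² = K(u) K(-u)` as a double integral and applying Fubini,
`∫ K² dν = ∫∫_{[-T,T]²} φ(t - s) ds dt` with `φ` the characteristic function of `ν`, which is at
most `2T ∫_{-2T}^{2T} |φ|`. Taking `T = π/(2ε)` and translating `ν` gives the theorem. -/

open MeasureTheory Complex Real Set

lemma integral_cexp_mul_I_eq_sinc (T u : ℝ) :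
    ∫ t in -T..T, cexp (t * u * I) = ↑(2 * T * sinc (T * u)) := by
  rcases eq_or_ne u 0 with rfl | hu
  · simp [two_mul]
  rcases eq_or_ne T 0 with rfl | hT
  · simp
  have hu' : (u : ℂ) ≠ 0 := ofReal_ne_zero.mpr hu
  have hT' : (T : ℂ) ≠ 0 := ofReal_ne_zero.mpr hT
  have hc : (u * I : ℂ) ≠ 0 := mul_ne_zero hu' I_ne_zero
  simp_rw [show ∀ t : ℝ, (t * u * I : ℂ) = u * I * t from fun t ↦ by ring]
  rw [integral_exp_mul_complex hc, sinc_of_ne_zero (mul_ne_zero hT hu)]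
  push_cast
  rw [Complex.sin]
  field_simp
  ring_nf
  rw [I_sq]
  ring

lemma two_div_pi_le_sinc {x : ℝ} (hx : |x| ≤ π / 2) : 2 / π ≤ sinc x := by
  wlog h : 0 ≤ x generalizing x
  · simpa using this (x := -x) (by simpa) (by linarith)
  rcases h.eq_or_lt with rfl | h
  · rw [sinc_zero, div_le_one pi_pos]
    exact two_le_pi
  rw [sinc_of_ne_zero h.ne', le_div_iff₀ h]
  exact mul_le_sin h.le (by rwa [abs_of_pos h] at hx)

lemma sq_sinc_eq_integral_prod {T : ℝ} (hT : 0 ≤ T) (u : ℝ) :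
    ((2 * T * sinc (T * u)) ^ 2 : ℝ) = ∫ p : ℝ × ℝ, cexp ((p.1 - p.2) * u * I)
      ∂((volume.restrict (Ioc (-T) T)).prod (volume.restrict (Ioc (-T) T))) := by
  have hsplit : ∀ p : ℝ × ℝ, cexp ((p.1 - p.2) * u * I)
      = cexp (p.1 * u * I) * cexp (p.2 * ↑(-u) * I) := fun p ↦ by
    rw [← Complex.exp_add]; push_cast; ring_nf
  simp_rw [hsplit]
  rw [integral_prod_mul (fun t : ℝ ↦ cexp (t * u * I)) (fun s : ℝ ↦ cexp (s * ↑(-u) * I))]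
  simp_rw [← intervalIntegral.integral_of_le (neg_le_self hT),
    integral_cexp_mul_I_eq_sinc, mul_neg, sinc_neg]
  push_cast
  ring

lemma integral_sq_sinc_eq_integral_charFun (ν : Measure ℝ) [IsFiniteMeasure ν] {T : ℝ}
    (hT : 0 ≤ T) :
    ((∫ u, (2 * T * sinc (T * u)) ^ 2 ∂ν : ℝ) : ℂ)
      = ∫ t in -T..T, ∫ s in -T..T, charFun ν (t - s) := by
  set V := volume.restrict (Ioc (-T) T)
  have hint : Integrable (fun q : ℝ × ℝ × ℝ ↦ cexp ((q.2.1 - q.2.2) * q.1 * I))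
      (ν.prod (V.prod V)) :=
    .of_bound (by fun_prop) 1 (ae_of_all _ fun q ↦ by
      rw [← ofReal_sub, ← ofReal_mul, norm_exp_ofReal_mul_I])
  have hint' : Integrable (fun p : ℝ × ℝ ↦ charFun ν (p.1 - p.2)) (V.prod V) :=
    .of_bound (by fun_prop) _ (ae_of_all _ fun _ ↦ norm_charFun_le _)
  calc ((∫ u, (2 * T * sinc (T * u)) ^ 2 ∂ν : ℝ) : ℂ)
      = ∫ u, ∫ p, cexp ((p.1 - p.2) * u * I) ∂(V.prod V) ∂ν := by
        rw [← integral_complex_ofReal]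
        simp_rw [sq_sinc_eq_integral_prod hT]
        rfl
    _ = ∫ p, ∫ u, cexp ((p.1 - p.2) * u * I) ∂ν ∂(V.prod V) := integral_integral_swap hint
    _ = ∫ p, charFun ν (p.1 - p.2) ∂(V.prod V) := by
        simp_rw [charFun_apply_real, ofReal_sub]
    _ = ∫ t in -T..T, ∫ s in -T..T, charFun ν (t - s) := by
        simp_rw [integral_prod _ hint', intervalIntegral.integral_of_le (neg_le_self hT)]
        rfl

lemma norm_integral_integral_comp_sub_le {E : Type*} [NormedAddCommGroup E] [NormedSpace ℝ E]
    {f : ℝ → E} (hf : Continuous f) {T : ℝ} (hT : 0 ≤ T) :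
    ‖∫ t in -T..T, ∫ s in -T..T, f (t - s)‖ ≤ 2 * T * ∫ r in -(2 * T)..2 * T, ‖f r‖ := by
  have hle := neg_le_self hT
  have hinner : ∀ t ∈ uIoc (-T) T,
      ‖∫ s in -T..T, f (t - s)‖ ≤ ∫ r in -(2 * T)..2 * T, ‖f r‖ := by
    intro t ht
    rw [uIoc_of_le hle] at ht
    calc ‖∫ s in -T..T, f (t - s)‖
        ≤ ∫ s in -T..T, ‖f (t - s)‖ := intervalIntegral.norm_integral_le_integral_norm hle
      _ = ∫ r in t - T..t + T, ‖f r‖ := by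
        rw [intervalIntegral.integral_comp_sub_left (fun r ↦ ‖f r‖) t, sub_neg_eq_add]
      _ ≤ ∫ r in -(2 * T)..2 * T, ‖f r‖ :=
        intervalIntegral.integral_mono_interval (by linarith [ht.1]) (by linarith)
          (by linarith [ht.2]) (ae_of_all _ fun _ ↦ norm_nonneg _)
          (hf.norm.intervalIntegrable _ _)
  calc ‖∫ t in -T..T, ∫ s in -T..T, f (t - s)‖
      ≤ (∫ r in -(2 * T)..2 * T, ‖f r‖) * |T - -T| :=
        intervalIntegral.norm_integral_le_of_norm_le_const hinner
    _ = 2 * T * ∫ r in -(2 * T)..2 * T, ‖f r‖ := by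
        rw [sub_neg_eq_add, abs_of_nonneg (by linarith)]
        ring

theorem measureReal_closedBall_zero_le_integral_norm_charFun (ν : Measure ℝ) [IsFiniteMeasure ν]
    {T : ℝ} (hT : 0 < T) :
    ν.real (Metric.closedBall 0 (π / (2 * T)))
      ≤ π ^ 2 / (8 * T) * ∫ r in -(2 * T)..2 * T, ‖charFun ν r‖ := by
  set K : ℝ → ℝ := fun u ↦ (2 * T * sinc (T * u)) ^ 2
  have hK_ge : Metric.closedBall 0 (π / (2 * T)) ⊆ {u | (4 * T / π) ^ 2 ≤ K u} := by
    intro u hu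
    rw [mem_closedBall_zero_iff, Real.norm_eq_abs, le_div_iff₀ (by positivity)] at hu
    have hsinc := two_div_pi_le_sinc (x := T * u)
      (by rw [abs_mul, abs_of_pos hT]; linarith)
    calc (4 * T / π) ^ 2 = (2 * T * (2 / π)) ^ 2 := by ring
      _ ≤ (2 * T * sinc (T * u)) ^ 2 := by gcongr
  have hK_int : Integrable K ν :=
    .of_bound (by fun_prop) ((2 * T) ^ 2) (ae_of_all _ fun u ↦ by
      simpa [K, abs_of_pos hT] using
        pow_le_pow_left₀ (by positivity) (mul_le_of_le_one_right (by positivity)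
          (abs_sinc_le_one (T * u))) 2)
  have hmarkov := mul_meas_ge_le_integral_of_nonneg (ae_of_all _ fun u ↦ sq_nonneg _) hK_int
    ((4 * T / π) ^ 2)
  have hfourier : ∫ u, K u ∂ν ≤ 2 * T * ∫ r in -(2 * T)..2 * T, ‖charFun ν r‖ := by
    have h := norm_integral_integral_comp_sub_le (continuous_charFun (μ := ν)) hT.le
    rwa [← integral_sq_sinc_eq_integral_charFun ν hT.le, Complex.norm_real,
      Real.norm_of_nonneg (integral_nonneg fun _ ↦ sq_nonneg _)] at h
  have hpos : 0 < (4 * T / π) ^ 2 := by positivity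
  rw [← le_div_iff₀' hpos] at hmarkov
  calc ν.real (Metric.closedBall 0 (π / (2 * T)))
      ≤ ν.real {u | (4 * T / π) ^ 2 ≤ K u} := measureReal_mono hK_ge
    _ ≤ (2 * T * ∫ r in -(2 * T)..2 * T, ‖charFun ν r‖) / (4 * T / π) ^ 2 :=
        hmarkov.trans (div_le_div_of_nonneg_right hfourier hpos.le)
    _ = π ^ 2 / (8 * T) * ∫ r in -(2 * T)..2 * T, ‖charFun ν r‖ := by
        field_simp
        ring

theorem measureReal_closedBall_le_integral_norm_charFun (ν : Measure ℝ) [IsFiniteMeasure ν]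
    (x : ℝ) {ε : ℝ} (hε : 0 < ε) :
    ν.real (Metric.closedBall x ε)
      ≤ π ^ 2 / 2 * ∫ θ in -1..1, ‖charFun ν (2 * π * (θ / ε))‖ := by
  set ν' := ν.map (· + -x)
  have hball : ν.real (Metric.closedBall x ε) = ν'.real (Metric.closedBall 0 ε) := by
    rw [map_measureReal_apply (measurable_add_const _) Metric.isClosed_closedBall.measurableSet]
    congr 1
    ext u
    simp [Real.dist_eq, sub_eq_add_neg]
  have hnorm : ∀ t, ‖charFun ν' t‖ = ‖charFun ν t‖ := fun t ↦ by
    rw [charFun_map_add_const, norm_mul, norm_exp_ofReal_mul_I, mul_one]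
  have hT : 0 < π / (2 * ε) := by positivity
  have hbound := measureReal_closedBall_zero_le_integral_norm_charFun ν' hT
  rw [show π / (2 * (π / (2 * ε))) = ε by field_simp] at hbound
  simp_rw [hnorm] at hbound
  have hscale : ∫ θ in -1..1, ‖charFun ν (2 * π * (θ / ε))‖
      = ε / (2 * π) * ∫ r in -(2 * π / ε)..2 * π / ε, ‖charFun ν r‖ := by
    simp_rw [show ∀ θ, 2 * π * (θ / ε) = 2 * π / ε * θ from fun θ ↦ by ring]
    rw [intervalIntegral.integral_comp_mul_left (fun r ↦ ‖charFun ν r‖) (by positivity)]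
    simp only [smul_eq_mul, mul_neg, mul_one, inv_div]
  have hwider : ∫ r in -(2 * (π / (2 * ε)))..2 * (π / (2 * ε)), ‖charFun ν r‖
      ≤ ∫ r in -(2 * π / ε)..2 * π / ε, ‖charFun ν r‖ := by
    have : 2 * (π / (2 * ε)) ≤ 2 * π / ε := by
      rw [show 2 * (π / (2 * ε)) = π / ε by field_simp]
      gcongr
      linarith [pi_pos]
    exact intervalIntegral.integral_mono_interval (by linarith) (by linarith) this
      (ae_of_all _ fun _ ↦ norm_nonneg _) (continuous_charFun.norm.intervalIntegrable _ _)
  calc ν.real (Metric.closedBall x ε)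
      ≤ π ^ 2 / (8 * (π / (2 * ε))) * ∫ r in -(2 * π / ε)..2 * π / ε, ‖charFun ν r‖ :=
        by rw [hball]; exact hbound.trans (by gcongr)
    _ = π ^ 2 / 2 * ∫ θ in -1..1, ‖charFun ν (2 * π * (θ / ε))‖ := by
        rw [hscale]
        field_simp
        ring

/-- Esséen's anti-concentration inequality: for a real random variable `ξ` with
characteristic function `φ(t) = E exp(2πiξt)`, there is an absolute constant `C`
such that `L(ξ, ε) ≤ C ∫_{-1}^{1} |φ(θ/ε)| dθ` for every `ε > 0`. -/
theorem stmt_9 :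
    ∃ C : ℝ, 0 < C ∧
      ∀ {Ω : Type} [MeasurableSpace Ω] (μ : Measure Ω), IsProbabilityMeasure μ →
      ∀ (ξ : Ω → ℝ), Measurable ξ →
      ∀ ε : ℝ, 0 < ε → ∀ x : ℝ,
        (μ {ω | |ξ ω - x| < ε}).toReal
          ≤ C * ∫ θ in (-1:ℝ)..1,
              ‖∫ ω, Complex.exp (Complex.I *
                (2 * Real.pi * ξ ω * (θ / ε) : ℝ)) ∂μ‖ := by
  refine ⟨π ^ 2 / 2, by positivity, fun {Ω} _ μ _ ξ hξ ε hε x ↦ ?_⟩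
  have hchar : ∀ θ, ∫ ω, cexp (I * ↑(2 * π * ξ ω * (θ / ε))) ∂μ
      = charFun (μ.map ξ) (2 * π * (θ / ε)) := fun θ ↦ by
    rw [charFun_apply_real, integral_map hξ.aemeasurable (by fun_prop)]
    congr with ω
    push_cast
    ring_nf
  calc (μ {ω | |ξ ω - x| < ε}).toReal
      ≤ (μ.map ξ).real (Metric.closedBall x ε) := by
        rw [map_measureReal_apply hξ Metric.isClosed_closedBall.measurableSet]
        exact measureReal_mono fun ω hω ↦ by simpa [Real.dist_eq] using hω.le
    _ ≤ _ := measureReal_closedBall_le_integral_norm_charFun _ x hε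
    _ = _ := by simp_rw [hchar]
end

section
/- Let f : {0,1}ⁿ → ℝ satisfy |f(x with i-th coordinate 1) − f(x with i-th coordinate 0)| ≤ dᵢ for all x ∈ {0,1}ⁿ and all i ∈ [n]. Let η be uniform on the set of {0,1}-vectors with exactly n/2 ones (n even). Then for all t ≥ 0, P(|f(η) − E f(η)| ≥ t) ≤ 2·exp(−t² / (8·Σᵢ dᵢ²)). -/
/-!
Reveal the coordinates of `η` one at a time, after sorting them so that `d 0` is the largest
constant. Conditioning on the first coordinate splits the slice into two smaller slices, on each of
which the induction hypothesis bounds the centered moment generating function. Their means differ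
by at most `2 d 0`: pairing a point with leading `1` and a `0` at coordinate `j` with the point
obtained by moving that `1` to `j` changes `f` by at most `d j + d 0 ≤ 2 d 0`, and every point of
either slice lies in the same number of pairs. Hoeffding's lemma for the two-valued conditional
mean then costs a factor `exp (l² d₀² / 2)`, so `f - 𝔼 f` is sub-Gaussian with variance proxy
`∑ dᵢ²`, and a Chernoff bound gives `2 exp (-t² / (2 ∑ dᵢ²))`.
-/

open Finset Real Function ProbabilityTheory
open scoped BigOperators

lemma two_point_hoeffding {P Q a b : ℝ} (hP : 0 ≤ P) (hQ : 0 ≤ Q) (hab : P * a + Q * b = 0) :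
    P * exp a + Q * exp b ≤ (P + Q) * exp ((a - b) ^ 2 / 8) := by
  rcases (add_nonneg hP hQ).eq_or_lt with hPQ | hPQ
  · obtain ⟨rfl, rfl⟩ : P = 0 ∧ Q = 0 := ⟨by linarith, by linarith⟩
    simp
  set p : unitInterval := ⟨P / (P + Q), div_nonneg hP hPQ.le, (div_le_one hPQ).2 (by linarith)⟩
  let X : Bool → ℝ := fun z => cond z a b
  have hX : ∀ z, X z ∈ Set.Icc (min a b) (max a b) := by
    intro z; cases z <;> simp [X]
  have hmean : ∫ z, X z ∂Ber(true, false, p) = 0 := by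
    rw [integral_bernoulliMeasure]
    simp only [X, p, cond_true, cond_false, smul_eq_mul]
    field_simp
    linarith
  have hmgf := (hasSubgaussianMGF_of_mem_Icc_of_integral_eq_zero
    (measurable_of_finite X).aemeasurable (Filter.Eventually.of_forall hX) hmean).mgf_le 1
  rw [mgf, integral_bernoulliMeasure] at hmgf
  simp only [cond_true, one_mul, smul_eq_mul, cond_false, NNReal.coe_pow, NNReal.coe_div,
    coe_nnnorm, norm_eq_abs, NNReal.coe_ofNat, one_pow, mul_one, X, p] at hmgf
  rw [max_sub_min_eq_abs, abs_abs, div_pow, sq_abs] at hmgf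
  calc P * exp a + Q * exp b = (P + Q) * (P / (P + Q) * exp a + (1 - P / (P + Q)) * exp b) := by
        field_simp; ring
    _ ≤ (P + Q) * exp ((a - b) ^ 2 / 8) := by
        refine mul_le_mul_of_nonneg_left (hmgf.trans_eq ?_) hPQ.le
        ring_nf

section Averages

variable {α β : Type*}

lemma Finset.expect_map (s : Finset β) (e : β ↪ α) (f : α → ℝ) :
    𝔼 x ∈ s.map e, f x = 𝔼 y ∈ s, f (e y) := by
  simp only [expect_eq_sum_div_card, sum_map, card_map]

noncomputable def centeredExpSum (s : Finset α) (f : α → ℝ) (l : ℝ) : ℝ :=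
  ∑ x ∈ s, exp (l * (f x - 𝔼 y ∈ s, f y))

lemma centeredExpSum_map (s : Finset β) (e : β ↪ α) (f : α → ℝ) (l : ℝ) :
    centeredExpSum (s.map e) f l = centeredExpSum s (f ∘ e) l := by
  simp only [centeredExpSum, sum_map, expect_map, comp_apply]

lemma centeredExpSum_le_of_subsingleton {s : Finset α} (hs : (s : Set α).Subsingleton)
    (f : α → ℝ) (l : ℝ) {C : ℝ} (hC : 0 ≤ C) : centeredExpSum s f l ≤ #s * exp C := by
  rcases s.eq_empty_or_nonempty with rfl | ⟨a, ha⟩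
  · simp [centeredExpSum]
  obtain rfl : s = {a} := eq_singleton_iff_unique_mem.2 ⟨ha, fun x hx => hs hx ha⟩
  simpa [centeredExpSum] using one_le_exp hC

lemma sum_exp_mul_sub_eq (s : Finset α) (f : α → ℝ) (l c : ℝ) :
    ∑ x ∈ s, exp (l * (f x - c)) = centeredExpSum s f l * exp (l * (𝔼 y ∈ s, f y - c)) := by
  rw [centeredExpSum, sum_mul]
  refine sum_congr rfl fun x _ => ?_
  rw [← exp_add]
  ring_nf

lemma centeredExpSum_le_of_filter {s : Finset α} (p : α → Prop) [DecidablePred p] {f : α → ℝ}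
    {l C c : ℝ}
    (hp : centeredExpSum (s.filter p) f l ≤ #(s.filter p) * exp C)
    (hnp : centeredExpSum (s.filter (¬ p ·)) f l ≤ #(s.filter (¬ p ·)) * exp C)
    (hc : |𝔼 x ∈ s.filter p, f x - 𝔼 x ∈ s.filter (¬ p ·), f x| ≤ c) :
    centeredExpSum s f l ≤ #s * exp (C + l ^ 2 * c ^ 2 / 8) := by
  set μ := 𝔼 x ∈ s, f x
  set μp := 𝔼 x ∈ s.filter p, f x
  set μnp := 𝔼 x ∈ s.filter (¬ p ·), f x
  have hcard : (#(s.filter p) : ℝ) + #(s.filter (¬ p ·)) = #s := by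
    exact_mod_cast card_filter_add_card_filter_not p
  have hmean :
      (#(s.filter p) : ℝ) * (l * (μp - μ)) + #(s.filter (¬ p ·)) * (l * (μnp - μ)) = 0 := by
    have h := sum_filter_add_sum_filter_not s p f
    simp only [← card_smul_expect, nsmul_eq_mul] at h
    linear_combination l * h - l * μ * hcard
  have hgap : (l * (μp - μ) - l * (μnp - μ)) ^ 2 / 8 ≤ l ^ 2 * c ^ 2 / 8 := by
    have : (μp - μnp) ^ 2 ≤ c ^ 2 := sq_le_sq' (abs_le.1 hc).1 (abs_le.1 hc).2
    have := mul_le_mul_of_nonneg_left this (sq_nonneg l)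
    linarith [show (l * (μp - μ) - l * (μnp - μ)) ^ 2 = l ^ 2 * (μp - μnp) ^ 2 by ring]
  calc centeredExpSum s f l
      = centeredExpSum (s.filter p) f l * exp (l * (μp - μ))
        + centeredExpSum (s.filter (¬ p ·)) f l * exp (l * (μnp - μ)) := by
        rw [centeredExpSum, ← sum_filter_add_sum_filter_not s p, sum_exp_mul_sub_eq,
          sum_exp_mul_sub_eq]
    _ ≤ exp C * (#(s.filter p) * exp (l * (μp - μ))
          + #(s.filter (¬ p ·)) * exp (l * (μnp - μ))) := by
        nlinarith [exp_pos (l * (μp - μ)), exp_pos (l * (μnp - μ))]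
    _ ≤ exp C * (#s * exp ((l * (μp - μ) - l * (μnp - μ)) ^ 2 / 8)) := by
        rw [← hcard]
        gcongr
        exact two_point_hoeffding (by positivity) (by positivity) hmean
    _ ≤ exp C * (#s * exp (l ^ 2 * c ^ 2 / 8)) := by gcongr
    _ = #s * exp (C + l ^ 2 * c ^ 2 / 8) := by rw [exp_add]; ring

end Averages

section Chernoff

variable {α : Type*}

lemma card_filter_le_le_of_sum_exp_le {s : Finset α} {g : α → ℝ} {D t : ℝ} (hD : 0 < D)
    (ht : 0 ≤ t) (hg : ∀ l, ∑ x ∈ s, exp (l * g x) ≤ #s * exp (l ^ 2 * D / 2)) :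
    (#{x ∈ s | t ≤ g x} : ℝ) ≤ #s * exp (-t ^ 2 / (2 * D)) := by
  set l := t / D
  have hl : 0 ≤ l := by positivity
  have hmarkov : (#{x ∈ s | t ≤ g x} : ℝ) * exp (l * t) ≤ #s * exp (l ^ 2 * D / 2) :=
    calc (#{x ∈ s | t ≤ g x} : ℝ) * exp (l * t) = ∑ x ∈ s with t ≤ g x, exp (l * t) := by
          rw [sum_const, nsmul_eq_mul]
      _ ≤ ∑ x ∈ s with t ≤ g x, exp (l * g x) :=
          sum_le_sum fun x hx => exp_le_exp.2 (by gcongr; exact (mem_filter.1 hx).2)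
      _ ≤ ∑ x ∈ s, exp (l * g x) :=
          sum_le_sum_of_subset_of_nonneg (filter_subset _ _) fun _ _ _ => (exp_pos _).le
      _ ≤ #s * exp (l ^ 2 * D / 2) := hg l
  have hexp : exp (l ^ 2 * D / 2) = exp (-t ^ 2 / (2 * D)) * exp (l * t) := by
    rw [← exp_add]
    congr 1
    simp only [l]
    field_simp
    ring
  rw [hexp, ← mul_assoc] at hmarkov
  exact le_of_mul_le_mul_right hmarkov (exp_pos _)

lemma card_filter_le_abs_sub_expect_le {s : Finset α} {f : α → ℝ} {D t : ℝ} (hD : 0 < D)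
    (ht : 0 ≤ t) (hf : ∀ l, centeredExpSum s f l ≤ #s * exp (l ^ 2 * D / 2)) :
    (#{x ∈ s | t ≤ |f x - 𝔼 y ∈ s, f y|} : ℝ) ≤ 2 * #s * exp (-t ^ 2 / (2 * D)) := by
  classical
  set μ := 𝔼 y ∈ s, f y
  have hupper := card_filter_le_le_of_sum_exp_le (g := fun x => f x - μ) hD ht hf
  have hlower := card_filter_le_le_of_sum_exp_le (g := fun x => -(f x - μ)) hD ht fun l => by
    simpa only [centeredExpSum, neg_mul_comm, neg_sq] using hf (-l)
  have hsub : {x ∈ s | t ≤ |f x - μ|} ⊆ {x ∈ s | t ≤ f x - μ} ∪ {x ∈ s | t ≤ -(f x - μ)} := by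
    intro x hx
    simp only [mem_union, mem_filter] at hx ⊢
    rcases le_abs'.1 hx.2 with h | h
    · exact Or.inr ⟨hx.1, by linarith⟩
    · exact Or.inl ⟨hx.1, h⟩
  calc (#{x ∈ s | t ≤ |f x - μ|} : ℝ)
      ≤ #{x ∈ s | t ≤ f x - μ} + #{x ∈ s | t ≤ -(f x - μ)} := by
        exact_mod_cast (card_le_card hsub).trans (card_union_le _ _)
    _ ≤ 2 * #s * exp (-t ^ 2 / (2 * D)) := by linarith

end Chernoff

def HasBoundedDifferences {n : ℕ} (f : (Fin n → Bool) → ℝ) (d : Fin n → ℝ) : Prop :=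
  ∀ x i, |f (update x i true) - f (update x i false)| ≤ d i

namespace HasBoundedDifferences

variable {n : ℕ} {f : (Fin n → Bool) → ℝ} {d : Fin n → ℝ}

lemma nonneg (hf : HasBoundedDifferences f d) (i : Fin n) : 0 ≤ d i :=
  (abs_nonneg _).trans (hf (fun _ => false) i)

lemma abs_sub_update_le (hf : HasBoundedDifferences f d) (x : Fin n → Bool) (i : Fin n)
    (b : Bool) : |f x - f (update x i b)| ≤ d i := by
  obtain ⟨c, y, rfl⟩ : ∃ c y, x = update y i c := ⟨x i, x, (update_eq_self i x).symm⟩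
  rw [update_idem]
  cases b <;> cases c
  · simpa using hf.nonneg i
  · exact hf y i
  · rw [abs_sub_comm]; exact hf y i
  · simpa using hf.nonneg i

lemma cons {f : (Fin (n + 1) → Bool) → ℝ} {d : Fin (n + 1) → ℝ}
    (hf : HasBoundedDifferences f d) (b : Bool) :
    HasBoundedDifferences (fun y => f (Fin.cons b y)) (fun i => d i.succ) := by
  intro y i
  simpa only [Fin.cons_update] using hf (Fin.cons b y) i.succ

lemma comp_perm (hf : HasBoundedDifferences f d) (σ : Equiv.Perm (Fin n)) :
    HasBoundedDifferences (fun x => f (x ∘ σ)) (d ∘ σ.symm) := by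
  intro x i
  simpa only [update_comp_equiv, comp_apply] using hf (x ∘ σ) (σ.symm i)

end HasBoundedDifferences

section BoolSlice

variable {n m : ℕ}

lemma card_filter_cons_eq_true (b : Bool) (y : Fin n → Bool) :
    #{i | (Fin.cons b y : Fin (n + 1) → Bool) i = true} = b.toNat + #{i | y i = true} := by
  simp only [card_filter, Fin.sum_univ_succ, Fin.cons_zero, Fin.cons_succ]
  cases b <;> simp

lemma card_filter_update_eq_true {y : Fin n → Bool} {j : Fin n} (hj : y j = false) :
    #{i | update y j true i = true} = #{i | y i = true} + 1 := by
  rw [← card_insert_of_notMem (a := j) (s := {i | y i = true}) (by simp [hj])]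
  congr 1
  ext i
  by_cases hi : i = j <;> simp [hi, update_apply]

lemma card_filter_eq_false (y : Fin n → Bool) :
    #{i | y i = false} = n - #{i | y i = true} := by
  have := card_filter_add_card_filter_not (s := univ) fun i => y i = true
  simp only [Bool.not_eq_true, card_univ, Fintype.card_fin] at this
  omega

def boolSlice (n m : ℕ) : Finset (Fin n → Bool) :=
  {x | #{i | x i = true} = m}

@[simp]
lemma mem_boolSlice {x : Fin n → Bool} : x ∈ boolSlice n m ↔ #{i | x i = true} = m := by
  simp [boolSlice]

lemma boolSlice_nonempty (h : m ≤ n) : (boolSlice n m).Nonempty := by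
  refine ⟨fun i => decide ((i : ℕ) < m), mem_boolSlice.2 ?_⟩
  simp only [decide_eq_true_eq, Fin.card_filter_val_lt, min_eq_right h]

lemma boolSlice_subsingleton (h : m = 0 ∨ n ≤ m) :
    (boolSlice n m : Set (Fin n → Bool)).Subsingleton := by
  intro x hx y hy
  simp only [mem_coe, mem_boolSlice] at hx hy
  funext i
  rcases h with rfl | h
  · rw [card_filter_eq_zero_iff] at hx hy
    simp_all
  · have hall : ∀ z : Fin n → Bool, #{i | z i = true} = m → z i = true := by
      intro z hz
      have hfull : #{i | z i = true} = #(univ : Finset (Fin n)) :=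
        (card_filter_le _ _).antisymm (by simpa [hz] using h)
      exact filter_card_eq hfull i (mem_univ i)
    rw [hall x hx, hall y hy]

def consEmbedding (b : Bool) : (Fin n → Bool) ↪ (Fin (n + 1) → Bool) where
  toFun y := Fin.cons b y
  inj' := Fin.cons_right_injective (α := fun _ => Bool) b

lemma filter_boolSlice_eq_map_cons (b : Bool) :
    (boolSlice (n + 1) (m + b.toNat)).filter (fun x => x 0 = b)
      = (boolSlice n m).map (consEmbedding b) := by
  ext x
  obtain ⟨c, y, rfl⟩ : ∃ c y, x = Fin.cons c y := ⟨x 0, Fin.tail x, (Fin.cons_self_tail x).symm⟩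
  simp only [mem_filter, mem_boolSlice, mem_map, consEmbedding, Embedding.coeFn_mk, Fin.cons_inj,
    card_filter_cons_eq_true, Fin.cons_zero]
  constructor
  · rintro ⟨hy, rfl⟩
    exact ⟨y, by omega, rfl, rfl⟩
  · rintro ⟨y, hy, rfl, rfl⟩
    exact ⟨by omega, rfl⟩

lemma map_boolSlice_arrowCongr (σ : Equiv.Perm (Fin n)) :
    (boolSlice n m).map (σ.arrowCongr (Equiv.refl Bool)).toEmbedding = boolSlice n m := by
  ext x
  simp only [mem_map_equiv, mem_boolSlice]
  rw [card_equiv σ (t := {i | x i = true}) (by simp)]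

end BoolSlice

section UpEdges

variable {n m : ℕ}

def upEdges (n m : ℕ) : Finset ((Fin n → Bool) × Fin n) :=
  (boolSlice n m ×ˢ univ).filter fun p => p.1 p.2 = false

lemma sum_upEdges_fst (g : (Fin n → Bool) → ℝ) :
    ∑ p ∈ upEdges n m, g p.1 = (n - m : ℕ) * ∑ y ∈ boolSlice n m, g y := by
  rw [upEdges, sum_filter, sum_product, mul_sum]
  refine sum_congr rfl fun y hy => ?_
  rw [← sum_filter]
  dsimp only
  rw [sum_const, card_filter_eq_false, mem_boolSlice.1 hy, nsmul_eq_mul]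

lemma sum_upEdges_update (g : (Fin n → Bool) → ℝ) :
    ∑ p ∈ upEdges n m, g (update p.1 p.2 true)
      = (m + 1 : ℕ) * ∑ z ∈ boolSlice n (m + 1), g z := by
  have hbij : ∑ p ∈ upEdges n m, g (update p.1 p.2 true)
      = ∑ q ∈ (boolSlice n (m + 1) ×ˢ univ).filter (fun q => q.1 q.2 = true), g q.1 := by
    refine sum_nbij' (fun p => (update p.1 p.2 true, p.2)) (fun q => (update q.1 q.2 false, q.2))
      ?_ ?_ ?_ ?_ fun _ _ => rfl
    · rintro ⟨y, j⟩ hp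
      simp only [upEdges, mem_filter, mem_product, mem_boolSlice, mem_univ, and_true] at hp ⊢
      simp [card_filter_update_eq_true hp.2, hp.1]
    · rintro ⟨z, j⟩ hq
      simp only [upEdges, mem_filter, mem_product, mem_boolSlice, mem_univ, and_true] at hq ⊢
      have hz := card_filter_update_eq_true (update_self j false z)
      rw [update_idem, update_eq_self_iff.2 hq.2.symm, hq.1] at hz
      exact ⟨by omega, update_self j false z⟩
    · rintro ⟨y, j⟩ hp
      simp only [upEdges, mem_filter] at hp
      simp [← hp.2]
    · rintro ⟨z, j⟩ hq
      simp only [mem_filter] at hq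
      simp [← hq.2]
  rw [hbij, sum_filter, sum_product, mul_sum]
  refine sum_congr rfl fun z hz => ?_
  rw [← sum_filter]
  dsimp only
  rw [sum_const, mem_boolSlice.1 hz, nsmul_eq_mul]

lemma upEdges_nonempty (hm : m < n) : (upEdges n m).Nonempty := by
  obtain ⟨y, hy⟩ := boolSlice_nonempty hm.le
  obtain ⟨j, hj⟩ : ({j | y j = false} : Finset (Fin n)).Nonempty := by
    rw [← card_pos, card_filter_eq_false, mem_boolSlice.1 hy]
    omega
  exact ⟨(y, j), by simp_all [upEdges]⟩

lemma expect_upEdges_fst (hm : m < n) (g : (Fin n → Bool) → ℝ) :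
    𝔼 p ∈ upEdges n m, g p.1 = 𝔼 y ∈ boolSlice n m, g y := by
  have hcard := sum_upEdges_fst (n := n) (m := m) fun _ => (1 : ℝ)
  simp only [sum_const, nsmul_eq_mul, mul_one] at hcard
  rw [expect_eq_sum_div_card, expect_eq_sum_div_card, sum_upEdges_fst, hcard, mul_div_mul_left]
  exact_mod_cast (Nat.sub_pos_of_lt hm).ne'

lemma expect_upEdges_update (g : (Fin n → Bool) → ℝ) :
    𝔼 p ∈ upEdges n m, g (update p.1 p.2 true) = 𝔼 z ∈ boolSlice n (m + 1), g z := by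
  have hcard := sum_upEdges_update (n := n) (m := m) fun _ => (1 : ℝ)
  simp only [sum_const, nsmul_eq_mul, mul_one] at hcard
  rw [expect_eq_sum_div_card, expect_eq_sum_div_card, sum_upEdges_update, hcard,
    mul_div_mul_left _ _ (by positivity)]

lemma abs_expect_boolSlice_sub_expect_succ_le (hm : m < n) {g h : (Fin n → Bool) → ℝ} {c : ℝ}
    (hc : ∀ y ∈ boolSlice n m, ∀ j, y j = false → |g y - h (update y j true)| ≤ c) :
    |𝔼 y ∈ boolSlice n m, g y - 𝔼 z ∈ boolSlice n (m + 1), h z| ≤ c := by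
  rw [← expect_upEdges_fst hm, ← expect_upEdges_update, ← expect_sub_distrib]
  refine (abs_expect_le _ _).trans (expect_le (upEdges_nonempty hm) fun p hp => ?_)
  simp only [upEdges, mem_filter, mem_product] at hp
  exact hc p.1 hp.1.1 p.2 hp.2

end UpEdges

section Concentration

lemma centeredExpSum_boolSlice_comp_perm {n m : ℕ} (σ : Equiv.Perm (Fin n))
    (f : (Fin n → Bool) → ℝ) (l : ℝ) :
    centeredExpSum (boolSlice n m) (fun x => f (x ∘ σ)) l = centeredExpSum (boolSlice n m) f l := by
  conv_rhs => rw [← map_boolSlice_arrowCongr σ.symm, centeredExpSum_map]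
  congr 1

variable {n : ℕ} {f : (Fin n → Bool) → ℝ} {d : Fin n → ℝ}

theorem centeredExpSum_boolSlice_le_of_antitone (hd : Antitone d)
    (hf : HasBoundedDifferences f d) (m : ℕ) (l : ℝ) :
    centeredExpSum (boolSlice n m) f l ≤ #(boolSlice n m) * exp (l ^ 2 * (∑ i, d i ^ 2) / 2) := by
  induction n generalizing m with
  | zero =>
    exact centeredExpSum_le_of_subsingleton (boolSlice_subsingleton (.inr m.zero_le)) f l
      (by positivity)
  | succ n ih =>
    by_cases hdeg : m = 0 ∨ n + 1 ≤ m
    · exact centeredExpSum_le_of_subsingleton (boolSlice_subsingleton hdeg) f l (by positivity)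
    obtain ⟨m, rfl⟩ : ∃ m', m = m' + 1 := Nat.exists_eq_succ_of_ne_zero (by omega)
    have hm : m < n := by omega
    have hd' : Antitone fun i : Fin n => d i.succ := fun _ _ hij => hd (Fin.succ_le_succ_iff.2 hij)
    have htrue := filter_boolSlice_eq_map_cons (n := n) (m := m) true
    have hfalse := filter_boolSlice_eq_map_cons (n := n) (m := m + 1) false
    simp only [Bool.toNat_true, Bool.toNat_false, add_zero] at htrue hfalse
    simp only [← Bool.not_eq_true] at hfalse
    have hcross : |𝔼 y ∈ boolSlice n m, f (Fin.cons true y)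
        - 𝔼 z ∈ boolSlice n (m + 1), f (Fin.cons false z)| ≤ 2 * d 0 := by
      refine abs_expect_boolSlice_sub_expect_succ_le hm fun y _ j _ => ?_
      have hj := hf.abs_sub_update_le (Fin.cons true y) j.succ true
      have h0 := hf.abs_sub_update_le (Fin.cons true (update y j true)) 0 false
      rw [← Fin.cons_update] at hj
      rw [Fin.update_cons_zero] at h0
      linarith [abs_sub_le (f (Fin.cons true y)) (f (Fin.cons true (update y j true)))
        (f (Fin.cons false (update y j true))), hd (Fin.zero_le j.succ)]
    have hstep := centeredExpSum_le_of_filter (s := boolSlice (n + 1) (m + 1)) (fun x => x 0 = true)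
      (C := l ^ 2 * (∑ i : Fin n, d i.succ ^ 2) / 2) (c := 2 * d 0) (l := l) (f := f)
      (by rw [htrue, centeredExpSum_map, card_map]; exact ih hd' (hf.cons true) m)
      (by rw [hfalse, centeredExpSum_map, card_map]; exact ih hd' (hf.cons false) (m + 1))
      (by rw [htrue, hfalse, expect_map, expect_map]; exact hcross)
    refine hstep.trans_eq ?_
    rw [Fin.sum_univ_succ]
    ring_nf

theorem centeredExpSum_boolSlice_le (hf : HasBoundedDifferences f d) (m : ℕ) (l : ℝ) :
    centeredExpSum (boolSlice n m) f l ≤ #(boolSlice n m) * exp (l ^ 2 * (∑ i, d i ^ 2) / 2) := by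
  obtain ⟨σ, hσ⟩ : ∃ σ : Equiv.Perm (Fin n), Antitone (d ∘ σ) :=
    ⟨Tuple.sort (-d), fun i j hij => by simpa using Tuple.monotone_sort (-d) hij⟩
  have h := centeredExpSum_boolSlice_le_of_antitone hσ (by simpa using hf.comp_perm σ.symm) m l
  have hsum : ∑ i, (d ∘ σ) i ^ 2 = ∑ i, d i ^ 2 := Equiv.sum_comp σ fun i => d i ^ 2
  rwa [hsum, centeredExpSum_boolSlice_comp_perm] at h

end Concentration

theorem stmt_14_general (n : ℕ) (f : (Fin n → Bool) → ℝ) (d : Fin n → ℝ)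
    (hf : ∀ (x : Fin n → Bool) (i : Fin n),
      |f (Function.update x i true) - f (Function.update x i false)| ≤ d i)
    (t : ℝ) (ht : 0 ≤ t) :
    let T := (Finset.univ : Finset (Fin n → Bool)).filter
      (fun x => ((Finset.univ : Finset (Fin n)).filter (fun i => x i = true)).card = n / 2)
    let Ef := (∑ x ∈ T, f x) / (T.card : ℝ)
    ((T.filter (fun x => t ≤ |f x - Ef|)).card : ℝ) / (T.card : ℝ)
      ≤ 2 * Real.exp (-(t^2) / (8 * ∑ i, (d i)^2)) := by
  intro T Ef
  rw [show Ef = 𝔼 x ∈ T, f x from (expect_eq_sum_div_card T f).symm]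
  rcases (sum_nonneg fun i _ => sq_nonneg (d i) : 0 ≤ ∑ i, d i ^ 2).eq_or_lt with hD | hD
  · rw [← hD, mul_zero, div_zero, exp_zero, mul_one]
    exact (div_le_one_of_le₀ (mod_cast card_filter_le _ _) (by positivity)).trans (by norm_num)
  refine div_le_of_le_mul₀ (by positivity) (by positivity) ?_
  calc (#{x ∈ T | t ≤ |f x - 𝔼 y ∈ T, f y|} : ℝ)
      ≤ 2 * #T * exp (-t ^ 2 / (2 * ∑ i, d i ^ 2)) :=
        card_filter_le_abs_sub_expect_le hD ht (centeredExpSum_boolSlice_le hf (n / 2))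
    _ ≤ 2 * exp (-t ^ 2 / (8 * ∑ i, d i ^ 2)) * #T := by
        rw [mul_right_comm]
        gcongr _ * exp ?_ * _
        rw [div_le_div_iff₀ (by positivity) (by positivity)]
        nlinarith [sq_nonneg t]

/-- Combinatorial concentration inequality of Kwan–Sudakov–Tran: if `f` on the
discrete cube has coordinate Lipschitz constants `dᵢ`, and `η` is uniform on the
slice of `{0,1}ⁿ`-vectors with exactly `n/2` ones, then `f(η)` concentrates. -/
theorem stmt_14 (n : ℕ) (he : Even n) (f : (Fin n → Bool) → ℝ) (d : Fin n → ℝ)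
    (hf : ∀ (x : Fin n → Bool) (i : Fin n),
      |f (Function.update x i true) - f (Function.update x i false)| ≤ d i)
    (t : ℝ) (ht : 0 ≤ t) :
    let T := (Finset.univ : Finset (Fin n → Bool)).filter
      (fun x => ((Finset.univ : Finset (Fin n)).filter (fun i => x i = true)).card = n / 2)
    let Ef := (∑ x ∈ T, f x) / (T.card : ℝ)
    ((T.filter (fun x => t ≤ |f x - Ef|)).card : ℝ) / (T.card : ℝ)
      ≤ 2 * Real.exp (-(t^2) / (8 * ∑ i, (d i)^2)) :=
  stmt_14_general n f d hf t ht
end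

section
/- Let n be even and n ≥ 10, let n/2 ≤ m ≤ n, and let M be a random m×n matrix whose rows are independent and each uniformly distributed on {0,1}-vectors with exactly n/2 ones. Then for every fixed unit vector v ∈ 𝕊^{n−1}, with r = |v₁+...+vₙ|, one has E‖Mv‖² = m(n−2)r²/(4(n−1)) + mn/(4(n−1)) ≥ (r² + 1)n/9. -/
/-!
Expanding the square, `(∑ i ∈ s, v i)² = ∑ i, ∑ j, [{i, j} ⊆ s] v i v j`, and a uniformly
random `k`-subset of an `n`-set contains a given pair `i ≠ j` with probability
`k(k-1)/(n(n-1))` and a given point with probability `k/n`. Hence one row of `M` has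
`E (∑ i ∈ s, v i)² = k(k-1)/(n(n-1)) r² + k(n-k)/(n(n-1)) ‖v‖²`, and by linearity over the
independent rows `E ‖Mv‖²` is `m` times this. For `k = n/2` and `‖v‖ = 1` this is the stated
formula; the lower bound follows coefficientwise from `2m ≥ n` and `n ≥ 10`.
-/

open Finset

theorem sum_pi_comp_apply {ι S : Type*} [Fintype ι] [DecidableEq ι] [Fintype S] (k : ι)
    (f : S → ℝ) :
    ∑ w : ι → S, f (w k) = (Fintype.card S : ℝ) ^ (Fintype.card ι - 1) * ∑ s, f s := by
  rw [← (Equiv.piSplitAt k fun _ => S).symm.sum_comp, Fintype.sum_prod_type]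
  simp [Fintype.card_subtype_compl, Finset.mul_sum]

theorem sum_sum_pi_comp_apply_div_card {ι S : Type*} [Fintype ι] [DecidableEq ι] [Fintype S]
    (f : S → ℝ) :
    (∑ w : ι → S, ∑ k, f (w k)) / Fintype.card (ι → S)
      = Fintype.card ι * ((∑ s, f s) / Fintype.card S) := by
  rcases isEmpty_or_nonempty ι with hι | hι
  · simp
  rcases isEmpty_or_nonempty S with hS | hS
  · simp
  obtain ⟨p, hp⟩ := Nat.exists_eq_add_one_of_ne_zero (Fintype.card_ne_zero (α := ι))
  rw [sum_comm]
  simp only [sum_pi_comp_apply, sum_const, card_univ, nsmul_eq_mul, Fintype.card_fun, hp,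
    Nat.add_sub_cancel, pow_succ]
  field_simp
  push_cast
  ring

section Subsets

variable {α : Type*} [Fintype α] [DecidableEq α]

theorem sq_sum_eq_sum_sum_ite_subset (s : Finset α) (v : α → ℝ) :
    (∑ i ∈ s, v i) ^ 2 = ∑ i, ∑ j, if {i, j} ⊆ s then v i * v j else 0 := by
  simp only [sq, sum_mul_sum, insert_subset_iff, singleton_subset_iff, ite_and, sum_ite_irrel,
    sum_ite_mem, univ_inter, sum_const_zero]

theorem sum_powersetCard_sq_sum {k : ℕ} (hk : 2 ≤ k) (v : α → ℝ) :
    ∑ s ∈ powersetCard k univ, (∑ i ∈ s, v i) ^ 2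
      = (Fintype.card α - 2).choose (k - 2) * (∑ i, v i) ^ 2
        + ((Fintype.card α - 1).choose (k - 1) - (Fintype.card α - 2).choose (k - 2))
          * ∑ i, v i ^ 2 := by
  have hpair (i j : α) : #{s ∈ powersetCard k univ | {i, j} ⊆ s}
      = if i = j then (Fintype.card α - 1).choose (k - 1)
        else (Fintype.card α - 2).choose (k - 2) := by
    rw [card_filter_powersetCard_subset _ _ _ (subset_univ _) (card_le_two.trans hk), card_univ]
    split_ifs with h
    · simp [h]
    · simp [card_pair h]
  calc ∑ s ∈ powersetCard k univ, (∑ i ∈ s, v i) ^ 2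
      = ∑ i, ∑ j, (#{s ∈ powersetCard k univ | {i, j} ⊆ s} : ℝ) * (v i * v j) := by
        simp only [sq_sum_eq_sum_sum_ite_subset]
        rw [sum_comm]
        refine sum_congr rfl fun i _ => ?_
        rw [sum_comm]
        simp only [← sum_filter, sum_const, nsmul_eq_mul]
    _ = ∑ i, ∑ j, ((Fintype.card α - 2).choose (k - 2) * (v i * v j)
          + if i = j then ((Fintype.card α - 1).choose (k - 1)
            - (Fintype.card α - 2).choose (k - 2)) * (v i * v j) else 0) := by
        refine sum_congr rfl fun i _ => sum_congr rfl fun j _ => ?_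
        rw [hpair]
        split_ifs <;> ring
    _ = _ := by
        simp only [sum_add_distrib, ← mul_sum, sum_ite_eq, mem_univ, if_true, sq, sum_mul_sum]

theorem sum_subtype_card_eq_sq_sum_div_card {k : ℕ} (hk : 2 ≤ k) (hkn : k ≤ Fintype.card α)
    (v : α → ℝ) :
    (∑ s : {s : Finset α // #s = k}, (∑ i ∈ s.1, v i) ^ 2)
        / Fintype.card {s : Finset α // #s = k}
      = k * (k - 1) / (Fintype.card α * (Fintype.card α - 1)) * (∑ i, v i) ^ 2
        + k * (Fintype.card α - k) / (Fintype.card α * (Fintype.card α - 1)) * ∑ i, v i ^ 2 := by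
  rw [Fintype.card_finset_len, ← sum_subtype _ (fun _ => mem_powersetCard_univ)
    (fun s => (∑ i ∈ s, v i) ^ 2), sum_powersetCard_sq_sum hk]
  set n := Fintype.card α
  have hchoose_one : (n.choose k : ℝ) * k = n * (n - 1).choose (k - 1) := by
    have := Nat.choose_mul (n := n) (k := k) (s := 1) (by omega)
    simp only [Nat.choose_one_right] at this
    exact_mod_cast this
  have hchoose_two : (n.choose k : ℝ) * (k * (k - 1)) = n * (n - 1) * (n - 2).choose (k - 2) := by
    have := congrArg (Nat.cast (R := ℝ)) (Nat.choose_mul (n := n) (k := k) (s := 2) hk)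
    push_cast [Nat.cast_choose_two] at this
    linear_combination 2 * this
  have hN : (n.choose k : ℝ) ≠ 0 := by exact_mod_cast (Nat.choose_pos hkn).ne'
  have hn : (n : ℝ) ≠ 0 := by have : 2 ≤ n := hk.trans hkn; positivity
  have hn1 : (n : ℝ) - 1 ≠ 0 := by
    have : (2 : ℝ) ≤ n := by exact_mod_cast hk.trans hkn
    linarith
  field_simp
  linear_combination (∑ i, v i ^ 2 - (∑ i, v i) ^ 2) * hchoose_two
    - (n - 1) * (∑ i, v i ^ 2) * hchoose_one

end Subsets

theorem sq_add_one_mul_div_nine_le {n m : ℝ} (hn : 10 ≤ n) (hnm : n ≤ 2 * m) (r : ℝ) :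
    (r ^ 2 + 1) * n / 9 ≤ m * (n - 2) * r ^ 2 / (4 * (n - 1)) + m * n / (4 * (n - 1)) := by
  rw [← add_div, div_le_div_iff₀ (by norm_num) (by linarith)]
  nlinarith [mul_nonneg (mul_nonneg (sub_nonneg.2 hnm) (by linarith : (0 : ℝ) ≤ n - 2))
      (sq_nonneg r),
    mul_nonneg (mul_nonneg (by linarith : (0 : ℝ) ≤ n) (sub_nonneg.2 hn)) (sq_nonneg r),
    mul_nonneg (sub_nonneg.2 hnm) (by linarith : (0 : ℝ) ≤ n)]

theorem stmt_18_general (n m : ℕ) (he : Even n) (h10 : 10 ≤ n) (hm1 : n/2 ≤ m)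
    (v : Fin n → ℝ) (hv : ∑ i, (v i)^2 = 1) :
    (∑ w : Fin m → {s : Finset (Fin n) // s.card = n/2},
        ∑ k : Fin m, (∑ i ∈ (w k).1, v i)^2)
      / (Fintype.card (Fin m → {s : Finset (Fin n) // s.card = n/2}) : ℝ)
    = (m:ℝ) * ((n:ℝ) - 2) * (∑ i, v i)^2 / (4 * ((n:ℝ) - 1))
      + (m:ℝ) * (n:ℝ) / (4 * ((n:ℝ) - 1))
    ∧ ((∑ i, v i)^2 + 1) * (n:ℝ) / 9
      ≤ (m:ℝ) * ((n:ℝ) - 2) * (∑ i, v i)^2 / (4 * ((n:ℝ) - 1))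
        + (m:ℝ) * (n:ℝ) / (4 * ((n:ℝ) - 1)) := by
  have hn : (10 : ℝ) ≤ n := by exact_mod_cast h10
  have hhalf : ((n / 2 : ℕ) : ℝ) = n / 2 := Nat.cast_div_charZero (even_iff_two_dvd.mp he)
  refine ⟨?_, sq_add_one_mul_div_nine_le hn ?_ _⟩
  · rw [sum_sum_pi_comp_apply_div_card
        fun s : {s : Finset (Fin n) // #s = n / 2} ↦ (∑ i ∈ s.1, v i) ^ 2,
      sum_subtype_card_eq_sq_sum_div_card (by omega) (by simpa using Nat.div_le_self n 2),
      Fintype.card_fin, Fintype.card_fin, hv, hhalf]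
    have : (n : ℝ) - 1 ≠ 0 := by linarith
    field_simp
    ring
  · have : (n / 2 : ℝ) ≤ m := hhalf ▸ by exact_mod_cast hm1
    linarith

/-- Expected squared norm of `Mv` where the rows of the random `m × n` matrix `M`
are independent and each uniformly distributed on `{0,1}`-vectors with exactly
`n/2` ones (encoded by a uniformly random tuple of `n/2`-element subsets),
together with the lower bound `(r²+1)n/9`. -/
theorem stmt_18 (n m : ℕ) (he : Even n) (h10 : 10 ≤ n) (hm1 : n/2 ≤ m) (hm2 : m ≤ n)
    (v : Fin n → ℝ) (hv : ∑ i, (v i)^2 = 1) :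
    (∑ w : Fin m → {s : Finset (Fin n) // s.card = n/2},
        ∑ k : Fin m, (∑ i ∈ (w k).1, v i)^2)
      / (Fintype.card (Fin m → {s : Finset (Fin n) // s.card = n/2}) : ℝ)
    = (m:ℝ) * ((n:ℝ) - 2) * (∑ i, v i)^2 / (4 * ((n:ℝ) - 1))
      + (m:ℝ) * (n:ℝ) / (4 * ((n:ℝ) - 1))
    ∧ ((∑ i, v i)^2 + 1) * (n:ℝ) / 9
      ≤ (m:ℝ) * ((n:ℝ) - 2) * (∑ i, v i)^2 / (4 * ((n:ℝ) - 1))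
        + (m:ℝ) * (n:ℝ) / (4 * ((n:ℝ) - 1)) :=
  stmt_18_general n m he h10 hm1 v hv
end
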